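/- arXiv:2502.17686 — 9 statements merged into one kernel-verified Lean document; each statement's English description precedes it below -/
import Mathlib

section
/- Let H be a 3-uniform hypergraph and v a vertex. The Berge degree of v equals |N(v)| − tree(L(v)), where tree(L(v)) is the number of connected components of the link graph L(v) that are trees. -/
/-!
A hyperedge through `v` and a neighbour `x` is `{v, x, z}` for an edge `xz` of the link `L(v)`,
so Berge stars at `v` are the same as sets of vertices of `L(v)` carrying pairwise distinct
incident edges. In a finite graph such a set misses a vertex of every tree component, since a tree
has one edge fewer than vertices. Conversely it can contain all vertices but a root of each tree
component (give each vertex the edge to its parent in a shortest-path tree) and every vertex of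
any other component (delete an edge `ab` lying on a cycle, root the shortest-path tree at `a` and
give `a` the edge `ab`).
-/

open Finset

variable {V : Type} [DecidableEq V]

/-- A hypergraph (given by its edge set) is 3-uniform. -/
def Uniform3 (E : Finset (Finset V)) : Prop := ∀ e ∈ E, e.card = 3

/-- There is a Berge star `K_{1,m}` centered at `v`: `m` distinct leaves `y i`
and `m` distinct hyperedges `f i` with `{v, y i} ⊆ f i`. -/
def IsBergeStar (E : Finset (Finset V)) (v : V) (m : ℕ) : Prop :=
  ∃ (y : Fin m → V) (f : Fin m → Finset V),
    Function.Injective y ∧ Function.Injective f ∧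
    ∀ i, f i ∈ E ∧ v ∈ f i ∧ y i ∈ f i ∧ y i ≠ v

/-- The Berge degree of `v`: the largest `m` such that a Berge star `K_{1,m}`
centered at `v` exists. -/
noncomputable def bergeDeg (E : Finset (Finset V)) (v : V) : ℕ :=
  sSup {m | IsBergeStar E v m}

/-- The degree of `v`: the number of hyperedges containing `v`. -/
def hdeg (E : Finset (Finset V)) (v : V) : ℕ := (E.filter (fun e => v ∈ e)).card

/-- The neighborhood of `v`: vertices sharing an edge with `v`. -/
def nbr (E : Finset (Finset V)) (v : V) : Finset V :=
  ((E.filter (fun e => v ∈ e)).biUnion id).erase v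

/-- The link graph of `v`: graph on `N(v)` with `x ~ y` iff `{v,x,y} ∈ E`. -/
def linkGraph (E : Finset (Finset V)) (v : V) : SimpleGraph {x // x ∈ nbr E v} :=
  SimpleGraph.fromRel (fun a b => ({v, a.1, b.1} : Finset V) ∈ E)

/-- The number of connected components of the link graph of `v` that are trees. -/
noncomputable def treeCount (E : Finset (Finset V)) (v : V) : ℕ :=
  Nat.card {c : (linkGraph E v).ConnectedComponent //
    ((linkGraph E v).induce c.supp).IsTree}


namespace SimpleGraph

variable {W : Type*} {G H : SimpleGraph W} {S T : Set W}

def HasDistinctIncidentEdgesOn (G : SimpleGraph W) (S : Set W) : Prop :=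
  ∃ z : W → W, (∀ x ∈ S, G.Adj x (z x)) ∧ S.InjOn fun x => s(x, z x)

theorem HasDistinctIncidentEdgesOn.mono (h : G.HasDistinctIncidentEdgesOn S) (hGH : G ≤ H)
    (hTS : T ⊆ S) : H.HasDistinctIncidentEdgesOn T :=
  let ⟨z, hadj, hinj⟩ := h
  ⟨z, fun x hx => hGH (hadj x (hTS hx)), hinj.mono hTS⟩

theorem HasDistinctIncidentEdgesOn.insert_of_deleteEdges {a b : W}
    (h : (G.deleteEdges {s(a, b)}).HasDistinctIncidentEdgesOn S) (haS : a ∉ S) (hab : G.Adj a b) :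
    G.HasDistinctIncidentEdgesOn (insert a S) := by
  classical
  obtain ⟨z, hadj, hinj⟩ := h
  have hz : Set.EqOn z (Function.update z a b) S := fun x hx =>
    (Function.update_of_ne (ne_of_mem_of_not_mem hx haS) _ _).symm
  refine ⟨Function.update z a b, ?_, ?_⟩
  · rintro x (rfl | hx)
    · simpa using hab
    · exact hz hx ▸ deleteEdges_le _ (hadj x hx)
  · refine (Set.injOn_insert haS).2 ⟨hinj.congr fun x hx => by simp only [hz hx], ?_⟩
    rintro ⟨x, hx, hxa⟩
    have hxz := hadj x hx
    simp only [← hz hx, Function.update_self] at hxa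
    simp [hxa] at hxz

theorem Reachable.exists_adj_dist_add_one_eq {r x : W} (hrx : G.Reachable r x) (hxr : x ≠ r) :
    ∃ y, G.Adj x y ∧ G.dist r y + 1 = G.dist r x := by
  obtain ⟨p, hp⟩ := hrx.symm.exists_walk_length_eq_dist
  have hnil : ¬ p.Nil := Walk.not_nil_of_ne hxr
  refine ⟨p.snd, Walk.adj_snd hnil, ?_⟩
  have h₁ : G.dist p.snd r ≤ p.tail.length := dist_le p.tail
  have h₂ : G.dist x r ≤ G.dist x p.snd + G.dist p.snd r :=
    (Walk.adj_snd hnil).reachable.dist_triangle_left r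
  have h₃ := Walk.length_tail_add_one hnil
  rw [dist_eq_one_iff_adj.2 (Walk.adj_snd hnil)] at h₂
  rw [dist_comm, dist_comm (u := r)]
  omega

/-- Every vertex other than `r` is assigned the edge to a neighbour closer to `r`. -/
theorem hasDistinctIncidentEdgesOn_reachable_diff (r : W) :
    G.HasDistinctIncidentEdgesOn ({x | G.Reachable r x} \ {r}) := by
  classical
  choose! z hz using fun x (hx : x ∈ {x | G.Reachable r x} \ {r}) =>
    Reachable.exists_adj_dist_add_one_eq hx.1 hx.2
  refine ⟨z, fun x hx => (hz x hx).1, fun x hx x' hx' hxx' => ?_⟩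
  rcases Sym2.eq_iff.1 hxx' with ⟨h, -⟩ | ⟨h, h'⟩
  · exact h
  · have hx₁ := (hz x hx).2
    have hx₂ := (hz x' hx').2
    rw [← h, ← h'] at hx₂
    omega

theorem Reachable.deleteEdges_of_reachable {a b x y : W}
    (hab : (G.deleteEdges {s(a, b)}).Reachable a b) (hxy : G.Reachable x y) :
    (G.deleteEdges {s(a, b)}).Reachable x y := by
  rw [reachable_iff_reflTransGen] at hxy ⊢
  refine Relation.reflTransGen_closed (fun u w huw => ?_) x y hxy
  rw [← reachable_iff_reflTransGen]
  by_cases he : s(u, w) = s(a, b)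
  · rcases Sym2.eq_iff.1 he with ⟨rfl, rfl⟩ | ⟨rfl, rfl⟩
    exacts [hab, hab.symm]
  · exact Adj.reachable (by simpa [he] using huw)

theorem hasDistinctIncidentEdgesOn_supp_of_not_isTree (c : G.ConnectedComponent)
    (hc : ¬ (G.induce c.supp).IsTree) : G.HasDistinctIncidentEdgesOn c.supp := by
  have hcyc : ¬ (G.induce c.supp).IsAcyclic := fun h => hc ⟨c.connected_toSimpleGraph, h⟩
  simp only [isAcyclic_iff_forall_adj_isBridge, isBridge_iff, not_forall, not_not] at hcyc
  obtain ⟨a, b, hab, hnb⟩ := hcyc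
  let G' := G.deleteEdges {s(a.1, b.1)}
  have hab' : G'.Reachable a b :=
    hnb.map ⟨Subtype.val, fun hxy => by simpa [G', Subtype.ext_iff] using hxy⟩
  have hsupp : c.supp ⊆ insert a.1 ({x | G'.Reachable a x} \ {a.1}) := fun x hx => by
    by_cases hxa : x = a
    · exact .inl hxa
    · exact .inr ⟨hab'.deleteEdges_of_reachable (c.reachable_of_mem_supp a.2 hx), hxa⟩
  exact ((hasDistinctIncidentEdgesOn_reachable_diff a.1).insert_of_deleteEdges
    (fun h => h.2 rfl) hab).mono le_rfl hsupp

theorem hasDistinctIncidentEdgesOn_iUnion {A : G.ConnectedComponent → Set W}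
    (hA : ∀ c, A c ⊆ c.supp) (h : ∀ c, G.HasDistinctIncidentEdgesOn (A c)) :
    G.HasDistinctIncidentEdgesOn (⋃ c, A c) := by
  choose z hadj hinj using h
  have hcomp : ∀ {x c}, x ∈ A c → G.connectedComponentMk x = c := fun hx => hA _ hx
  refine ⟨fun x => z (G.connectedComponentMk x) x, ?_, ?_⟩
  · rintro x ⟨_, ⟨c, rfl⟩, hx⟩
    simpa [hcomp hx] using hadj c x hx
  · rintro x ⟨_, ⟨c, rfl⟩, hx⟩ x' ⟨_, ⟨c', rfl⟩, hx'⟩ hxx'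
    obtain rfl := hcomp hx
    obtain rfl := hcomp hx'
    -- `x'` is `x` or its chosen neighbour, so both lie in the same component
    simp only at hx hx' hxx'
    have hsame : G.connectedComponentMk x = G.connectedComponentMk x' := by
      rcases Sym2.eq_iff.1 hxx' with ⟨h, -⟩ | ⟨-, h⟩
      · rw [h]
      · rw [← h]
        exact ConnectedComponent.connectedComponentMk_eq_of_adj (hadj _ x hx)
    simp only [← hsame] at hx' hxx'
    exact hinj _ hx hx' hxx'

theorem exists_hasDistinctIncidentEdgesOn_ncard_add_eq [Finite W] :
    ∃ S, G.HasDistinctIncidentEdgesOn S ∧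
      S.ncard + Nat.card {c : G.ConnectedComponent // (G.induce c.supp).IsTree} = Nat.card W := by
  classical
  choose root hroot using fun c : G.ConnectedComponent => c.nonempty_supp
  let treeRoot (c : {c : G.ConnectedComponent // (G.induce c.supp).IsTree}) : W := root c
  have htreeRoot : Function.Injective treeRoot := fun c c' (h : root c = root c') =>
    Subtype.ext <| ConnectedComponent.eq_of_common_vertex (hroot c) (h ▸ hroot c')
  let A (c : G.ConnectedComponent) : Set W :=
    if (G.induce c.supp).IsTree then c.supp \ {root c} else c.supp
  have hA : ∀ c, A c ⊆ c.supp := fun c => by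
    by_cases hc : (G.induce c.supp).IsTree <;> simp [A, hc]
  have hAdist : ∀ c, G.HasDistinctIncidentEdgesOn (A c) := fun c => by
    by_cases hc : (G.induce c.supp).IsTree
    · simp only [A, if_pos hc]
      exact (hasDistinctIncidentEdgesOn_reachable_diff (root c)).mono le_rfl
        fun x hx => ⟨c.reachable_of_mem_supp (hroot c) hx.1, hx.2⟩
    · simpa [A, hc] using hasDistinctIncidentEdgesOn_supp_of_not_isTree c hc
  have hcover : (Set.range treeRoot)ᶜ ⊆ ⋃ c, A c := fun x hx => by
    refine Set.mem_iUnion.2 ⟨G.connectedComponentMk x, ?_⟩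
    by_cases hc : (G.induce (G.connectedComponentMk x).supp).IsTree
    · simp only [A, if_pos hc]
      exact ⟨rfl, fun h => hx ⟨⟨_, hc⟩, h.symm⟩⟩
    · simp only [A, if_neg hc]
      rfl
  refine ⟨(Set.range treeRoot)ᶜ,
    (hasDistinctIncidentEdgesOn_iUnion hA hAdist).mono le_rfl hcover, ?_⟩
  rw [add_comm, ← Set.ncard_range_of_injective htreeRoot]
  exact Set.ncard_add_ncard_compl _

theorem HasDistinctIncidentEdgesOn.ncard_le [Finite W] (h : G.HasDistinctIncidentEdgesOn S) :
    S.ncard ≤ G.edgeSet.ncard :=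
  let ⟨_, hadj, hinj⟩ := h
  Set.ncard_le_ncard_of_injOn _ (fun x hx => hadj x hx) hinj

theorem IsTree.not_hasDistinctIncidentEdgesOn_univ [Finite W] (hG : G.IsTree) :
    ¬ G.HasDistinctIncidentEdgesOn Set.univ := fun h => by
  classical
  have : Fintype W := Fintype.ofFinite W
  have := hG.card_edgeFinset
  have := h.ncard_le
  rw [Set.ncard_univ, ← coe_edgeFinset, Set.ncard_coe_finset, Nat.card_eq_fintype_card] at this
  omega

theorem HasDistinctIncidentEdgesOn.induce_supp (h : G.HasDistinctIncidentEdgesOn S)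
    {c : G.ConnectedComponent} (hc : c.supp ⊆ S) :
    (G.induce c.supp).HasDistinctIncidentEdgesOn Set.univ := by
  obtain ⟨z, hadj, hinj⟩ := h
  refine ⟨fun x => ⟨z x, c.mem_supp_of_adj_mem_supp x.2 (hadj x (hc x.2))⟩,
    fun x _ => by simpa using hadj x (hc x.2), fun x _ x' _ hxx' => Subtype.ext ?_⟩
  exact hinj (hc x.2) (hc x'.2) (by simpa using congrArg (Sym2.map Subtype.val) hxx')

theorem HasDistinctIncidentEdgesOn.exists_mem_supp_notMem [Finite W]
    (h : G.HasDistinctIncidentEdgesOn S) {c : G.ConnectedComponent}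
    (hc : (G.induce c.supp).IsTree) : ∃ x ∈ c.supp, x ∉ S := by
  by_contra! hsub
  exact hc.not_hasDistinctIncidentEdgesOn_univ (h.induce_supp hsub)

theorem HasDistinctIncidentEdgesOn.ncard_add_le [Finite W] (h : G.HasDistinctIncidentEdgesOn S) :
    S.ncard + Nat.card {c : G.ConnectedComponent // (G.induce c.supp).IsTree} ≤ Nat.card W := by
  choose w hw hwS using fun c : {c : G.ConnectedComponent // (G.induce c.supp).IsTree} =>
    h.exists_mem_supp_notMem c.2
  have hinj : Function.Injective w := fun c c' hcc' =>
    Subtype.ext <| ConnectedComponent.eq_of_common_vertex (hw c) (hcc' ▸ hw c')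
  have hS : S ⊆ (Set.range w)ᶜ := by
    rintro x hx ⟨c, rfl⟩
    exact hwS c hx
  rw [← Set.ncard_range_of_injective hinj, ← Set.ncard_compl_add_ncard (Set.range w)]
  exact Nat.add_le_add_right (Set.ncard_le_ncard hS) _

end SimpleGraph

theorem mem_nbr {E : Finset (Finset V)} {v x : V} :
    x ∈ nbr E v ↔ x ≠ v ∧ ∃ e ∈ E, v ∈ e ∧ x ∈ e := by
  simp [nbr, and_assoc]

theorem linkGraph_adj {E : Finset (Finset V)} {v : V} {a b : {x // x ∈ nbr E v}} :
    (linkGraph E v).Adj a b ↔ a ≠ b ∧ ({v, a.1, b.1} : Finset V) ∈ E := by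
  rw [linkGraph, SimpleGraph.fromRel_adj, Finset.pair_comm b.1, or_self]

theorem Uniform3.exists_eq_insert_pair {E : Finset (Finset V)} (hU : Uniform3 E) {e : Finset V}
    (he : e ∈ E) {v y : V} (hv : v ∈ e) (hy : y ∈ e) (hyv : y ≠ v) :
    ∃ z, z ≠ v ∧ z ≠ y ∧ e = {v, y, z} := by
  have hy' : y ∈ e.erase v := mem_erase.2 ⟨hyv, hy⟩
  obtain ⟨z, hz⟩ := card_eq_one.1 <| by
    rw [card_erase_of_mem hy', card_erase_of_mem hv, hU e he]
  have hze : z ∈ (e.erase v).erase y := hz ▸ mem_singleton_self z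
  refine ⟨z, (mem_erase.1 (mem_erase.1 hze).2).1, (mem_erase.1 hze).1, ?_⟩
  rw [← insert_erase hv, ← insert_erase hy', hz]

theorem Sym2.mk_eq_mk_of_insert_pair_eq {v a b c d : V} (ha : a ≠ v) (hb : b ≠ v) (hc : c ≠ v)
    (hd : d ≠ v) (h : ({v, a, b} : Finset V) = {v, c, d}) : s(a, b) = s(c, d) := by
  refine Sym2.ext fun x => ?_
  by_cases hx : x = v
  · subst hx
    simp [ha.symm, hb.symm, hc.symm, hd.symm]
  · simpa [hx] using Finset.ext_iff.1 h x

theorem IsBergeStar.exists_hasDistinctIncidentEdgesOn_linkGraph {E : Finset (Finset V)}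
    (hU : Uniform3 E) {v : V} {m : ℕ} (h : IsBergeStar E v m) :
    ∃ S, (linkGraph E v).HasDistinctIncidentEdgesOn S ∧ S.ncard = m := by
  obtain ⟨y, f, hy, hf, hyf⟩ := h
  choose z hzv hzy hfz using fun i =>
    hU.exists_eq_insert_pair (hyf i).1 (hyf i).2.1 (hyf i).2.2.1 (hyf i).2.2.2
  let y' (i : Fin m) : {x // x ∈ nbr E v} :=
    ⟨y i, mem_nbr.2 ⟨(hyf i).2.2.2, f i, (hyf i).1, (hyf i).2.1, (hyf i).2.2.1⟩⟩
  let z' (i : Fin m) : {x // x ∈ nbr E v} :=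
    ⟨z i, mem_nbr.2 ⟨hzv i, f i, (hyf i).1, (hyf i).2.1, by simp [hfz i]⟩⟩
  have hy' : Function.Injective y' := fun i j hij => hy (congrArg Subtype.val hij)
  have hadj : ∀ i, (linkGraph E v).Adj (y' i) (z' i) := fun i =>
    linkGraph_adj.2 ⟨fun h => hzy i (congrArg Subtype.val h).symm, hfz i ▸ (hyf i).1⟩
  have hinj : Function.Injective fun i => s(y' i, z' i) := fun i j hij => hf <| by
    simpa [Sym2.toFinset_mk_eq, y', z', ← hfz] using
      congrArg (fun e => insert v (Sym2.map Subtype.val e).toFinset) hij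
  refine ⟨Set.range y', ⟨Function.extend y' z' id, ?_, ?_⟩, ?_⟩
  · rintro _ ⟨i, rfl⟩
    simpa only [hy'.extend_apply] using hadj i
  · rintro _ ⟨i, rfl⟩ _ ⟨j, rfl⟩ hij
    simp only [hy'.extend_apply] at hij
    exact congrArg y' (hinj hij)
  · rw [Set.ncard_range_of_injective hy', Nat.card_fin]

theorem SimpleGraph.HasDistinctIncidentEdgesOn.isBergeStar_linkGraph {E : Finset (Finset V)}
    {v : V} {S : Set {x // x ∈ nbr E v}} (h : (linkGraph E v).HasDistinctIncidentEdgesOn S) :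
    IsBergeStar E v S.ncard := by
  obtain ⟨z, hadj, hinj⟩ := h
  let e : Fin S.ncard ≃ S := (Finite.equivFinOfCardEq (Nat.card_coe_set_eq S)).symm
  have hlink := fun i => linkGraph_adj.1 (hadj _ (e i).2)
  refine ⟨fun i => (e i).1.1, fun i => {v, (e i).1.1, (z (e i)).1}, fun i j hij =>
    e.injective (Subtype.ext (Subtype.ext hij)), fun i j hij => e.injective (Subtype.ext ?_),
    fun i => ⟨(hlink i).2, by simp, by simp, (mem_nbr.1 (e i).1.2).1⟩⟩
  refine hinj (e i).2 (e j).2 (Sym2.map.injective Subtype.val_injective ?_)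
  simpa using Sym2.mk_eq_mk_of_insert_pair_eq (mem_nbr.1 (e i).1.2).1 (mem_nbr.1 (z (e i)).2).1
    (mem_nbr.1 (e j).1.2).1 (mem_nbr.1 (z (e j)).2).1 hij

theorem stmt1 (E : Finset (Finset V)) (hU : Uniform3 E) (v : V) :
    bergeDeg E v = (nbr E v).card - treeCount E v := by
  have hcard : Nat.card {x // x ∈ nbr E v} = (nbr E v).card := Nat.card_eq_finsetCard _
  obtain ⟨S, hS, hSt⟩ := (linkGraph E v).exists_hasDistinctIncidentEdgesOn_ncard_add_eq
  refine IsGreatest.csSup_eq ⟨?_, fun m hm => ?_⟩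
  · have hSn : S.ncard = (nbr E v).card - treeCount E v := by
      rw [treeCount]
      omega
    exact hSn ▸ hS.isBergeStar_linkGraph
  · obtain ⟨T, hT, rfl⟩ := IsBergeStar.exists_hasDistinctIncidentEdgesOn_linkGraph hU hm
    have := hT.ncard_add_le
    rw [treeCount]
    omega
end

section
/- If G and G' are both aggressively Berge-K_{1,ℓ}-saturated 3-uniform hypergraphs, then their disjoint union G ⊔ G' is aggressively Berge-K_{1,ℓ}-saturated. -/
open Finset

variable {V : Type} [DecidableEq V]

/-- `E` contains no Berge star `K_{1,ℓ}`. -/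
def BergeFree (E : Finset (Finset V)) (ℓ : ℕ) : Prop := ∀ v, ¬ IsBergeStar E v ℓ

/-- `E` is Berge-`K_{1,ℓ}`-saturated. -/
def Saturated3 (E : Finset (Finset V)) (ℓ : ℕ) : Prop :=
  BergeFree E ℓ ∧
  ∀ e : Finset V, e.card = 3 → e ∉ E → ∃ w, IsBergeStar (insert e E) w ℓ

/-- The disjoint union of two hypergraphs. -/
def sumEdges {W : Type} [DecidableEq W]
    (E : Finset (Finset V)) (F : Finset (Finset W)) : Finset (Finset (V ⊕ W)) :=
  E.image (fun e => e.map ⟨Sum.inl, Sum.inl_injective⟩) ∪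
  F.image (fun e => e.map ⟨Sum.inr, Sum.inr_injective⟩)

/-- `E` is aggressively Berge-`K_{1,ℓ}`-saturated: its disjoint union with any
Berge-`K_{1,ℓ}`-saturated 3-graph is Berge-`K_{1,ℓ}`-saturated. -/
def Aggressive (E : Finset (Finset V)) (ℓ : ℕ) : Prop :=
  ∀ (W : Type) [Fintype W] [DecidableEq W] (F : Finset (Finset W)),
    Uniform3 F → Saturated3 F ℓ → Saturated3 (sumEdges E F) ℓ

/-!
Up to relabelling the vertices along `(V ⊕ W) ⊕ X ≃ V ⊕ (W ⊕ X)`, the union `(G ⊔ G') ⊔ H` is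
`G ⊔ (G' ⊔ H)`. If `H` is a saturated 3-graph, then `G' ⊔ H` is a saturated 3-graph because `G'`
is aggressive, hence `G ⊔ (G' ⊔ H)` is saturated because `G` is; and relabelling vertices
preserves Berge stars, hence saturation.
-/

section Relabel

variable {A B : Type}

def relabel (σ : A ≃ B) (E : Finset (Finset A)) : Finset (Finset B) :=
  E.map σ.finsetCongr.toEmbedding

lemma mem_relabel {σ : A ≃ B} {E : Finset (Finset A)} {e : Finset B} :
    e ∈ relabel σ E ↔ σ.symm.finsetCongr e ∈ E := by
  rw [relabel, Finset.mem_map_equiv, Equiv.finsetCongr_symm]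

lemma relabel_insert [DecidableEq A] [DecidableEq B] (σ : A ≃ B) (E : Finset (Finset A))
    (e : Finset A) :
    relabel σ (insert e E) = insert (σ.finsetCongr e) (relabel σ E) :=
  Finset.map_insert _ _ _

lemma relabel_symm_relabel (σ : A ≃ B) (E : Finset (Finset A)) :
    relabel σ.symm (relabel σ E) = E := by
  ext e
  rw [mem_relabel, mem_relabel, Equiv.symm_symm, ← Equiv.finsetCongr_symm,
    Equiv.symm_apply_apply]

lemma IsBergeStar.relabel {E : Finset (Finset A)} {v : A} {m : ℕ} (σ : A ≃ B)
    (h : IsBergeStar E v m) : IsBergeStar (relabel σ E) (σ v) m := by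
  obtain ⟨y, f, hy, hf, hyf⟩ := h
  refine ⟨σ ∘ y, σ.finsetCongr ∘ f, σ.injective.comp hy, σ.finsetCongr.injective.comp hf,
    fun i => ?_⟩
  obtain ⟨hfE, hvf, hyf, hyv⟩ := hyf i
  exact ⟨Finset.mem_map_of_mem _ hfE, Finset.mem_map_of_mem _ hvf, Finset.mem_map_of_mem _ hyf,
    σ.injective.ne hyv⟩

lemma isBergeStar_relabel_iff {σ : A ≃ B} {E : Finset (Finset A)} {w : B} {m : ℕ} :
    IsBergeStar (relabel σ E) w m ↔ IsBergeStar E (σ.symm w) m := by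
  refine ⟨fun h => ?_, fun h => ?_⟩
  · simpa only [relabel_symm_relabel] using h.relabel σ.symm
  · simpa only [Equiv.apply_symm_apply] using h.relabel σ

lemma Saturated3.relabel [DecidableEq A] [DecidableEq B] {E : Finset (Finset A)} {ℓ : ℕ}
    (σ : A ≃ B) (hE : Saturated3 E ℓ) :
    Saturated3 (relabel σ E) ℓ := by
  refine ⟨fun w h => hE.1 _ (isBergeStar_relabel_iff.1 h), fun e he3 he => ?_⟩
  obtain ⟨w, hw⟩ := hE.2 (σ.symm.finsetCongr e) (by rwa [Equiv.finsetCongr_apply, card_map])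
    (mt mem_relabel.2 he)
  refine ⟨σ w, ?_⟩
  simpa only [relabel_insert, ← Equiv.finsetCongr_symm, Equiv.apply_symm_apply] using
    hw.relabel σ

end Relabel

lemma Uniform3.sumEdges {A B : Type} [DecidableEq A] [DecidableEq B]
    {E : Finset (Finset A)} {F : Finset (Finset B)} (hE : Uniform3 E) (hF : Uniform3 F) :
    Uniform3 (sumEdges E F) := by
  intro e he
  rcases Finset.mem_union.1 he with he | he
  · obtain ⟨e, he', rfl⟩ := Finset.mem_image.1 he
    rw [card_map, hE e he']
  · obtain ⟨e, he', rfl⟩ := Finset.mem_image.1 he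
    rw [card_map, hF e he']

lemma sumEdges_sumEdges {A B C : Type} [DecidableEq A] [DecidableEq B] [DecidableEq C]
    (E : Finset (Finset A)) (F : Finset (Finset B)) (H : Finset (Finset C)) :
    sumEdges (sumEdges E F) H =
      relabel (Equiv.sumAssoc A B C).symm (sumEdges E (sumEdges F H)) := by
  rw [relabel, Finset.map_eq_image]
  simp only [sumEdges, Finset.image_union, Finset.image_image, Function.comp_def,
    Equiv.coe_toEmbedding, Equiv.finsetCongr_apply, Finset.map_map, Finset.union_assoc]
  rfl

theorem stmt2_general {W : Type} [Fintype W] [DecidableEq W]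
    (E : Finset (Finset V)) (F : Finset (Finset W)) (ℓ : ℕ)
    (hF : Uniform3 F)
    (hAE : Aggressive E ℓ) (hAF : Aggressive F ℓ) :
    Aggressive (sumEdges E F) ℓ := by
  intro X _ _ H hH hHsat
  rw [sumEdges_sumEdges]
  exact (hAE (W ⊕ X) (sumEdges F H) (hF.sumEdges hH) (hAF X H hH hHsat)).relabel _

theorem stmt2 {W : Type} [Fintype V] [Fintype W] [DecidableEq W]
    (E : Finset (Finset V)) (F : Finset (Finset W)) (ℓ : ℕ)
    (hE : Uniform3 E) (hF : Uniform3 F)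
    (hAE : Aggressive E ℓ) (hAF : Aggressive F ℓ) :
    Aggressive (sumEdges E F) ℓ :=
  stmt2_general E F ℓ hF hAE hAF
end

section
/- For all ℓ ≥ 5, every vertex of the sun graph S_ℓ has Berge degree exactly ℓ − 1, and for every 3-element non-edge e of S_ℓ, the hypergraph S_ℓ + e contains a vertex of Berge degree at least ℓ (so S_ℓ is Berge-K_{1,ℓ}-saturated). -/
set_option linter.unusedSectionVars false

open Finset

variable {V : Type} [DecidableEq V]

/-- Vertex set of the sun graph `S_ℓ`: vertices `w_i` (`i ∈ [ℓ-3]`) and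
`x_j` (`j ∈ [ℓ-1]`). -/
abbrev SunV (ℓ : ℕ) := Fin (ℓ - 3) ⊕ Fin (ℓ - 1)

-- The edges of the sun graph: `w_i x_j x_{j+1}`, indices of `x` mod `ℓ-1`.
open Classical in
noncomputable def sunEdges (ℓ : ℕ) [NeZero (ℓ - 1)] : Finset (Finset (SunV ℓ)) :=
  Finset.univ.filter (fun e => ∃ (i : Fin (ℓ - 3)) (j : Fin (ℓ - 1)),
    e = {Sum.inl i, Sum.inr j, Sum.inr (j + 1)})

/-! ### General Berge-star infrastructure -/

def IsBergeStarIn (E : Finset (Finset V)) (v : V) (N : Finset V) (m : ℕ) : Prop :=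
  ∃ (y : Fin m → V) (f : Fin m → Finset V),
    Function.Injective y ∧ Function.Injective f ∧
    ∀ i, f i ∈ E ∧ v ∈ f i ∧ y i ∈ f i ∧ y i ≠ v ∧ y i ∈ N

lemma IsBergeStarIn.star {E : Finset (Finset V)} {v : V} {N : Finset V} {m : ℕ}
    (h : IsBergeStarIn E v N m) : IsBergeStar E v m := by
  obtain ⟨y, f, hy, hf, hall⟩ := h
  exact ⟨y, f, hy, hf, fun i => ⟨(hall i).1, (hall i).2.1, (hall i).2.2.1, (hall i).2.2.2.1⟩⟩

lemma bergeStar_zero (E : Finset (Finset V)) (v : V) : IsBergeStar E v 0 :=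
  ⟨Fin.elim0, Fin.elim0, fun i => i.elim0, fun i => i.elim0, fun i => i.elim0⟩

lemma starIn_of_finset (E : Finset (Finset V)) (v : V) (N : Finset V)
    (P : Finset (V × Finset V))
    (h1 : Set.InjOn Prod.fst (P : Set (V × Finset V)))
    (h2 : Set.InjOn Prod.snd (P : Set (V × Finset V)))
    (h3 : ∀ p ∈ P, p.2 ∈ E ∧ v ∈ p.2 ∧ p.1 ∈ p.2 ∧ p.1 ≠ v ∧ p.1 ∈ N) :
    IsBergeStarIn E v N P.card := by
  set g := P.equivFin.symm with hg
  refine ⟨fun i => (g i : V × Finset V).1, fun i => (g i : V × Finset V).2, ?_, ?_, ?_⟩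
  · intro a b hab
    have h' : g a = g b := Subtype.ext (h1 (g a).2 (g b).2 hab)
    simpa using g.injective h'
  · intro a b hab
    have h' : g a = g b := Subtype.ext (h2 (g a).2 (g b).2 hab)
    simpa using g.injective h'
  · intro i
    exact h3 _ (g i).2

lemma star_le_card (E : Finset (Finset V)) (v : V) (N : Finset V) {m : ℕ}
    (h : IsBergeStar E v m)
    (hN : ∀ e ∈ E, v ∈ e → ∀ u ∈ e, u ≠ v → u ∈ N) : m ≤ N.card := by
  obtain ⟨y, f, hy, hf, hall⟩ := h
  have hsub : (univ.image y : Finset V) ⊆ N := by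
    intro u hu
    simp only [mem_image, mem_univ, true_and] at hu
    obtain ⟨i, rfl⟩ := hu
    exact hN _ (hall i).1 (hall i).2.1 _ (hall i).2.2.1 (hall i).2.2.2
  calc m = (univ.image y).card := by
        rw [Finset.card_image_of_injective _ hy, card_univ, Fintype.card_fin]
  _ ≤ N.card := card_le_card hsub

lemma snoc_injective {m : ℕ} {α : Type*} {y : Fin m → α} {u : α}
    (hy : Function.Injective y) (hu : ∀ i, y i ≠ u) :
    Function.Injective (Fin.snoc y u : Fin (m+1) → α) := by
  intro a b hab
  induction a using Fin.lastCases with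
  | last =>
    induction b using Fin.lastCases with
    | last => rfl
    | cast b =>
      rw [Fin.snoc_last, Fin.snoc_castSucc] at hab
      exact absurd hab.symm (hu b)
  | cast a =>
    induction b using Fin.lastCases with
    | last =>
      rw [Fin.snoc_last, Fin.snoc_castSucc] at hab
      exact absurd hab (hu a)
    | cast b =>
      rw [Fin.snoc_castSucc, Fin.snoc_castSucc] at hab
      exact congrArg Fin.castSucc (hy hab)

lemma star_extend {E : Finset (Finset V)} {v : V} {N : Finset V} {m : ℕ}
    (h : IsBergeStarIn E v N m) {e : Finset V} {u : V}
    (heE : e ∉ E) (hv : v ∈ e) (hu : u ∈ e) (huv : u ≠ v) (huN : u ∉ N) :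
    IsBergeStar (insert e E) v (m + 1) := by
  obtain ⟨y, f, hy, hf, hall⟩ := h
  refine ⟨Fin.snoc y u, Fin.snoc f e, ?_, ?_, ?_⟩
  · exact snoc_injective hy (fun i hi => huN (hi ▸ (hall i).2.2.2.2))
  · exact snoc_injective hf (fun i hi => heE (hi ▸ (hall i).1))
  · intro i
    induction i using Fin.lastCases with
    | last => simp [hv, hu, huv, heE]
    | cast i =>
      simp only [Fin.snoc_castSucc]
      exact ⟨Finset.mem_insert_of_mem (hall i).1, (hall i).2.1, (hall i).2.2.1,
        (hall i).2.2.2.1⟩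

lemma bergeStar_le_fintype [Fintype V] {E : Finset (Finset V)} {v : V} {m : ℕ}
    (h : IsBergeStar E v m) : m ≤ Fintype.card V := by
  obtain ⟨y, _, hy, _, _⟩ := h
  simpa using Fintype.card_le_of_injective y hy

lemma bergeDeg_eq {E : Finset (Finset V)} {v : V} {d : ℕ}
    (hmem : IsBergeStar E v d) (hub : ∀ m, IsBergeStar E v m → m ≤ d) :
    bergeDeg E v = d :=
  le_antisymm (csSup_le ⟨0, bergeStar_zero E v⟩ hub) (le_csSup ⟨d, hub⟩ hmem)

lemma le_bergeDeg [Fintype V] {E : Finset (Finset V)} {v : V} {d : ℕ}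
    (hmem : IsBergeStar E v d) : d ≤ bergeDeg E v :=
  le_csSup ⟨Fintype.card V, fun _ h => bergeStar_le_fintype h⟩ hmem

/-! ### Fin arithmetic helpers -/

lemma val_succ {n : ℕ} [NeZero n] (j : Fin n) : (j + 1).val = (j.val + 1) % n := by
  rw [Fin.val_add, Fin.val_one', Nat.add_mod_mod]

lemma succ_val_cases {n : ℕ} (j : Fin n) :
    ((j.val + 1) % n = j.val + 1 ∧ j.val + 1 < n) ∨ ((j.val + 1) % n = 0 ∧ j.val + 1 = n) := by
  have := j.isLt
  rcases Nat.lt_or_ge (j.val + 1) n with h | h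
  · exact Or.inl ⟨Nat.mod_eq_of_lt h, h⟩
  · have h2 : j.val + 1 = n := by omega
    exact Or.inr ⟨by rw [h2, Nat.mod_self], h2⟩

lemma fin_ne_add_one {n : ℕ} (hn : 4 ≤ n) [NeZero n] (j : Fin n) : j + 1 ≠ j := by
  intro h
  have h1 := congrArg Fin.val h
  rw [val_succ] at h1
  have h2 := succ_val_cases j
  have := j.isLt
  omega

lemma fin_ne_add_two {n : ℕ} (hn : 4 ≤ n) [NeZero n] (j : Fin n) : j + 1 + 1 ≠ j := by
  intro h
  have h1 := congrArg Fin.val h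
  rw [val_succ, val_succ] at h1
  have s1 := succ_val_cases j
  have s2 := succ_val_cases (j + 1)
  rw [val_succ] at s2
  have := j.isLt
  omega

lemma fin_sub_one_ne_add_one {n : ℕ} (hn : 4 ≤ n) [NeZero n] (j : Fin n) : j - 1 ≠ j + 1 := by
  intro h
  have h2 : j = j + 1 + 1 := by
    conv_lhs => rw [← sub_add_cancel j 1, h]
  exact fin_ne_add_two hn j h2.symm

lemma fin_sub_one_ne_self {n : ℕ} (hn : 4 ≤ n) [NeZero n] (j : Fin n) : j - 1 ≠ j := by
  intro h
  have h2 : j = j + 1 := by conv_lhs => rw [← sub_add_cancel j 1, h]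
  exact fin_ne_add_one hn j h2.symm

lemma fin_sub_add_cancel {n : ℕ} [NeZero n] (j : Fin n) : j - 1 + 1 = j := sub_add_cancel j 1

lemma fin_eq_sub_iff {n : ℕ} [NeZero n] (j j' : Fin n) : j' = j - 1 ↔ j = j' + 1 := by
  constructor
  · rintro rfl; rw [fin_sub_add_cancel]
  · rintro rfl; rw [add_sub_cancel_right]

lemma fin_triangle {n : ℕ} (hn : 4 ≤ n) [NeZero n] (j1 j2 j3 : Fin n)
    (h12 : j1 ≠ j2) (h13 : j1 ≠ j3) (h23 : j2 ≠ j3) :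
    ∃ p q : Fin n, (p = j1 ∨ p = j2 ∨ p = j3) ∧ (q = j1 ∨ q = j2 ∨ q = j3) ∧
      q ≠ p ∧ q ≠ p + 1 ∧ p ≠ q + 1 := by
  by_contra hcon
  push_neg at hcon
  have key : ∀ p q : Fin n, (p = j1 ∨ p = j2 ∨ p = j3) → (q = j1 ∨ q = j2 ∨ q = j3) →
      q ≠ p → q.val = (p.val + 1) % n ∨ p.val = (q.val + 1) % n := by
    intro p q hp hq hne
    rcases eq_or_ne q (p + 1) with h | h
    · exact Or.inl (by rw [h, val_succ])
    rcases eq_or_ne p (q + 1) with h2 | h2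
    · exact Or.inr (by rw [h2, val_succ])
    exact absurd h2 (by simpa using hcon p q hp hq hne h)
  have k1 := key j1 j2 (Or.inl rfl) (Or.inr (Or.inl rfl)) (Ne.symm h12)
  have k2 := key j1 j3 (Or.inl rfl) (Or.inr (Or.inr rfl)) (Ne.symm h13)
  have k3 := key j2 j3 (Or.inr (Or.inl rfl)) (Or.inr (Or.inr rfl)) (Ne.symm h23)
  have e12 : j1.val ≠ j2.val := fun h => h12 (Fin.ext h)
  have e13 : j1.val ≠ j3.val := fun h => h13 (Fin.ext h)
  have e23 : j2.val ≠ j3.val := fun h => h23 (Fin.ext h)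
  have s1 := succ_val_cases j1; have s2 := succ_val_cases j2; have s3 := succ_val_cases j3
  have l1 := j1.isLt; have l2 := j2.isLt; have l3 := j3.isLt
  omega

/-! ### Sun graph: edges -/

lemma mem_sunEdges {ℓ : ℕ} [NeZero (ℓ - 1)] {e : Finset (SunV ℓ)} :
    e ∈ sunEdges ℓ ↔ ∃ (i : Fin (ℓ - 3)) (j : Fin (ℓ - 1)),
      e = {Sum.inl i, Sum.inr j, Sum.inr (j + 1)} := by
  simp [sunEdges]

def eA (ℓ : ℕ) [NeZero (ℓ - 1)] (j : Fin (ℓ - 1)) (i : Fin (ℓ - 3)) : Finset (SunV ℓ) :=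
  {Sum.inl i, Sum.inr (j - 1), Sum.inr j}
def eB (ℓ : ℕ) [NeZero (ℓ - 1)] (j : Fin (ℓ - 1)) (i : Fin (ℓ - 3)) : Finset (SunV ℓ) :=
  {Sum.inl i, Sum.inr j, Sum.inr (j + 1)}

section Sun
variable {ℓ : ℕ} [NeZero (ℓ - 1)]

lemma eA_mem (j : Fin (ℓ - 1)) (i : Fin (ℓ - 3)) : eA ℓ j i ∈ sunEdges ℓ := by
  refine mem_sunEdges.mpr ⟨i, j - 1, ?_⟩
  rw [eA, fin_sub_add_cancel]

lemma eB_mem (j : Fin (ℓ - 1)) (i : Fin (ℓ - 3)) : eB ℓ j i ∈ sunEdges ℓ :=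
  mem_sunEdges.mpr ⟨i, j, rfl⟩

lemma eA_inj {j : Fin (ℓ - 1)} {a b : Fin (ℓ - 3)} (h : eA ℓ j a = eA ℓ j b) : a = b := by
  have : (Sum.inl a : SunV ℓ) ∈ eA ℓ j b := by rw [← h]; simp [eA]
  simpa [eA] using this

lemma eB_inj {j : Fin (ℓ - 1)} {a b : Fin (ℓ - 3)} (h : eB ℓ j a = eB ℓ j b) : a = b := by
  have : (Sum.inl a : SunV ℓ) ∈ eB ℓ j b := by rw [← h]; simp [eB]
  simpa [eB] using this

lemma eA_ne_eB (hℓ : 5 ≤ ℓ) (j : Fin (ℓ - 1)) (a b : Fin (ℓ - 3)) : eA ℓ j a ≠ eB ℓ j b := by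
  have hn : 4 ≤ ℓ - 1 := by omega
  intro h
  have : (Sum.inr (j - 1) : SunV ℓ) ∈ eB ℓ j b := by rw [← h]; simp [eA]
  simp only [eB, mem_insert, mem_singleton, Sum.inr.injEq, reduceCtorEq, false_or] at this
  rcases this with h2 | h2
  · exact fin_sub_one_ne_self hn j h2
  · exact fin_sub_one_ne_add_one hn j h2

lemma sun_edge_inj (hℓ : 5 ≤ ℓ) {i i' : Fin (ℓ - 3)} {j j' : Fin (ℓ - 1)}
    (h : eB ℓ j i = eB ℓ j' i') : i = i' ∧ j = j' := by
  have hn : 4 ≤ ℓ - 1 := by omega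
  have hi : (Sum.inl i : SunV ℓ) ∈ eB ℓ j' i' := by rw [← h]; simp [eB]
  have hj : (Sum.inr j : SunV ℓ) ∈ eB ℓ j' i' := by rw [← h]; simp [eB]
  have hj' : (Sum.inr j' : SunV ℓ) ∈ eB ℓ j i := by rw [h]; simp [eB]
  simp only [eB, mem_insert, mem_singleton, Sum.inl.injEq, Sum.inr.injEq, reduceCtorEq,
    false_or, or_false] at hi hj hj'
  refine ⟨hi, ?_⟩
  rcases hj with rfl | hj
  · rfl
  rcases hj' with rfl | hj'
  · exact absurd hj.symm (fin_ne_add_one hn j')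
  · exfalso
    rw [hj'] at hj
    exact fin_ne_add_two hn j hj.symm

/-! ### Sun graph: the two Berge stars of size `ℓ - 1` -/

lemma sun_star_inl (hℓ : 5 ≤ ℓ) (i : Fin (ℓ - 3)) :
    IsBergeStarIn (sunEdges ℓ) (Sum.inl i) (univ.image Sum.inr) (ℓ - 1) := by
  have hn : 4 ≤ ℓ - 1 := by omega
  have hcard : ((univ : Finset (Fin (ℓ - 1))).image
      (fun j => ((Sum.inr j : SunV ℓ), eB ℓ j i))).card = ℓ - 1 := by
    rw [Finset.card_image_of_injective _ ?_, card_univ, Fintype.card_fin]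
    intro a b hab
    have := congrArg Prod.fst hab
    simpa using this
  have key := starIn_of_finset (sunEdges ℓ) (Sum.inl i) (univ.image Sum.inr)
      ((univ : Finset (Fin (ℓ - 1))).image (fun j => ((Sum.inr j : SunV ℓ), eB ℓ j i))) ?_ ?_ ?_
  · rw [hcard] at key; exact key
  · rintro p hp q hq hpq
    simp only [coe_image, Set.mem_image] at hp hq
    obtain ⟨a, -, rfl⟩ := hp; obtain ⟨b, -, rfl⟩ := hq
    have : a = b := by simpa using hpq
    rw [this]
  · rintro p hp q hq hpq
    simp only [coe_image, Set.mem_image] at hp hq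
    obtain ⟨a, -, rfl⟩ := hp; obtain ⟨b, -, rfl⟩ := hq
    have hab : a = b := (sun_edge_inj hℓ (by simpa using hpq)).2
    rw [hab]
  · rintro p hp
    simp only [mem_image, mem_univ, true_and] at hp
    obtain ⟨a, rfl⟩ := hp
    exact ⟨eB_mem a i, by simp [eB], by simp [eB], by simp, by simp⟩

lemma sun_star_inr (hℓ : 5 ≤ ℓ) (j : Fin (ℓ - 1)) :
    IsBergeStarIn (sunEdges ℓ) (Sum.inr j)
      (univ.image Sum.inl ∪ {Sum.inr (j - 1), Sum.inr (j + 1)}) (ℓ - 1) := by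
  have hn : 4 ≤ ℓ - 1 := by omega
  haveI : NeZero (ℓ - 3) := ⟨by omega⟩
  obtain ⟨i0, i1, hi01⟩ : ∃ a b : Fin (ℓ - 3), a ≠ b :=
    ⟨⟨0, by omega⟩, ⟨1, by omega⟩, by simp [Fin.ext_iff]⟩
  have hsub : j - 1 ≠ j + 1 := fin_sub_one_ne_add_one hn j
  have hj1 : j - 1 ≠ j := fin_sub_one_ne_self hn j
  have hj2 : j + 1 ≠ j := fin_ne_add_one hn j
  set P : Finset (SunV ℓ × Finset (SunV ℓ)) :=
    ((univ.erase i0).image fun a => ((Sum.inl a : SunV ℓ), eB ℓ j a)) ∪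
      {((Sum.inl i0 : SunV ℓ), eA ℓ j i0), ((Sum.inr (j - 1) : SunV ℓ), eA ℓ j i1),
       ((Sum.inr (j + 1) : SunV ℓ), eB ℓ j i0)} with hP
  have hmemP : ∀ p, p ∈ P ↔ ((∃ a, a ≠ i0 ∧ p = ((Sum.inl a : SunV ℓ), eB ℓ j a)) ∨
      p = ((Sum.inl i0 : SunV ℓ), eA ℓ j i0) ∨ p = ((Sum.inr (j - 1) : SunV ℓ), eA ℓ j i1) ∨
      p = ((Sum.inr (j + 1) : SunV ℓ), eB ℓ j i0)) := by
    intro p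
    simp only [hP, mem_union, mem_image, mem_erase, mem_univ, and_true, mem_insert,
      mem_singleton]
    constructor
    · rintro (⟨a, ha, rfl⟩ | h)
      · exact Or.inl ⟨a, ha, rfl⟩
      · exact Or.inr h
    · rintro (⟨a, ha, rfl⟩ | h)
      · exact Or.inl ⟨a, ha, rfl⟩
      · exact Or.inr h
  have hcard : P.card = ℓ - 1 := by
    rw [hP, card_union_of_disjoint, Finset.card_image_of_injective, card_erase_of_mem
      (mem_univ i0), card_univ, Fintype.card_fin]
    · have c3 : ({((Sum.inl i0 : SunV ℓ), eA ℓ j i0), ((Sum.inr (j - 1) : SunV ℓ), eA ℓ j i1),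
          ((Sum.inr (j + 1) : SunV ℓ), eB ℓ j i0)} :
          Finset (SunV ℓ × Finset (SunV ℓ))).card = 3 := by
        rw [card_insert_of_notMem, card_insert_of_notMem, card_singleton]
        · simp [Prod.ext_iff, hsub]
        · simp [Prod.ext_iff]
      rw [c3]
      omega
    · intro a b hab
      have := congrArg Prod.fst hab
      simpa using this
    · rw [disjoint_left]
      rintro p hp hq
      simp only [mem_image, mem_erase, mem_univ, and_true] at hp
      obtain ⟨a, ha, rfl⟩ := hp
      simp only [mem_insert, mem_singleton, Prod.ext_iff] at hq
      rcases hq with ⟨h, -⟩ | ⟨h, -⟩ | ⟨h, -⟩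
      · exact ha (by simpa using h)
      · simp at h
      · simp at h
  have key := starIn_of_finset (sunEdges ℓ) (Sum.inr j)
      (univ.image Sum.inl ∪ {Sum.inr (j - 1), Sum.inr (j + 1)}) P ?_ ?_ ?_
  · rw [hcard] at key; exact key
  · -- InjOn fst
    intro p hp q hq hpq
    rw [mem_coe, hmemP] at hp hq
    rcases hp with ⟨a, ha, rfl⟩ | rfl | rfl | rfl <;>
      rcases hq with ⟨b, hb, rfl⟩ | rfl | rfl | rfl
    · have : a = b := by simpa using hpq
      rw [this]
    · exact absurd (by simpa using hpq) ha
    · simp at hpq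
    · simp at hpq
    · exact absurd (by simpa using hpq.symm) hb
    · rfl
    · simp at hpq
    · simp at hpq
    · simp at hpq
    · simp at hpq
    · rfl
    · exact absurd (by simpa using hpq) hsub
    · simp at hpq
    · simp at hpq
    · exact absurd (by simpa using hpq.symm) hsub
    · rfl
  · -- InjOn snd
    intro p hp q hq hpq
    rw [mem_coe, hmemP] at hp hq
    rcases hp with ⟨a, ha, rfl⟩ | rfl | rfl | rfl <;>
      rcases hq with ⟨b, hb, rfl⟩ | rfl | rfl | rfl
    · have : a = b := eB_inj (by simpa using hpq)
      rw [this]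
    · exact absurd (by simpa using hpq.symm) (eA_ne_eB hℓ j i0 a)
    · exact absurd (by simpa using hpq.symm) (eA_ne_eB hℓ j i1 a)
    · exact absurd (eB_inj (by simpa using hpq)) ha
    · exact absurd (by simpa using hpq) (eA_ne_eB hℓ j i0 b)
    · rfl
    · exact absurd (eA_inj (by simpa using hpq)) hi01
    · exact absurd (by simpa using hpq) (eA_ne_eB hℓ j i0 i0)
    · exact absurd (by simpa using hpq) (eA_ne_eB hℓ j i1 b)
    · exact absurd (eA_inj (by simpa using hpq)) (Ne.symm hi01)
    · rfl
    · exact absurd (by simpa using hpq) (eA_ne_eB hℓ j i1 i0)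
    · exact absurd (eB_inj (by simpa using hpq)).symm hb
    · exact absurd (by simpa using hpq.symm) (eA_ne_eB hℓ j i0 i0)
    · exact absurd (by simpa using hpq.symm) (eA_ne_eB hℓ j i1 i0)
    · rfl
  · -- h3
    intro p hp
    rw [hmemP] at hp
    rcases hp with ⟨a, ha, rfl⟩ | rfl | rfl | rfl
    · exact ⟨eB_mem j a, by simp [eB], by simp [eB], by simp, by simp⟩
    · exact ⟨eA_mem j i0, by simp [eA], by simp [eA], by simp, by simp⟩
    · exact ⟨eA_mem j i1, by simp [eA], by simp [eA], by simp [hj1], by simp⟩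
    · exact ⟨eB_mem j i0, by simp [eB], by simp [eB], by simp [hj2], by simp⟩

/-! ### Sun graph: upper bound -/

lemma sun_ub (hℓ : 5 ≤ ℓ) (v : SunV ℓ) {m : ℕ} (h : IsBergeStar (sunEdges ℓ) v m) :
    m ≤ ℓ - 1 := by
  have hn : 4 ≤ ℓ - 1 := by omega
  cases v with
  | inl i =>
    have hc : ((univ : Finset (Fin (ℓ - 1))).image (Sum.inr : _ → SunV ℓ)).card = ℓ - 1 := by
      rw [Finset.card_image_of_injective _ Sum.inr_injective, card_univ, Fintype.card_fin]
    rw [← hc]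
    refine star_le_card _ _ _ h ?_
    intro f hf hv u hu hune
    obtain ⟨i', j, rfl⟩ := mem_sunEdges.mp hf
    simp only [mem_insert, mem_singleton, Sum.inl.injEq, reduceCtorEq, or_false] at hv
    subst hv
    simp only [mem_insert, mem_singleton] at hu
    rcases hu with rfl | rfl | rfl
    · exact absurd rfl hune
    · exact mem_image_of_mem Sum.inr (mem_univ j)
    · exact mem_image_of_mem Sum.inr (mem_univ (j + 1))
  | inr j =>
    have hc : ((univ : Finset (Fin (ℓ - 3))).image (Sum.inl : _ → SunV ℓ) ∪
        {Sum.inr (j - 1), Sum.inr (j + 1)}).card = ℓ - 1 := by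
      rw [card_union_of_disjoint]
      · rw [Finset.card_image_of_injective _ Sum.inl_injective, card_univ, Fintype.card_fin,
          card_insert_of_notMem (by simp [fin_sub_one_ne_add_one hn j]), card_singleton]
        omega
      · rw [disjoint_left]
        rintro p hp hq
        simp only [mem_image, mem_univ, true_and] at hp
        obtain ⟨a, rfl⟩ := hp
        simp at hq
    rw [← hc]
    refine star_le_card _ _ _ h ?_
    intro f hf hv u hu hune
    obtain ⟨i', j', rfl⟩ := mem_sunEdges.mp hf
    simp only [mem_insert, mem_singleton, Sum.inr.injEq, reduceCtorEq, false_or] at hv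
    simp only [mem_insert, mem_singleton] at hu
    rcases hu with rfl | rfl | rfl
    · exact mem_union_left _ (mem_image_of_mem Sum.inl (mem_univ i'))
    · rcases hv with rfl | hv
      · exact absurd rfl hune
      · have : j' = j - 1 := (fin_eq_sub_iff j j').mpr hv
        subst this
        simp
    · rcases hv with rfl | hv
      · simp
      · rw [← hv] at hune
        exact absurd rfl hune

/-! ### Part 2 helpers -/

lemma part2_inl (hℓ : 5 ≤ ℓ) {e : Finset (SunV ℓ)} (i i' : Fin (ℓ - 3)) (hii : i ≠ i')
    (hi : Sum.inl i ∈ e) (hi' : Sum.inl i' ∈ e) (heE : e ∉ sunEdges ℓ) :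
    ℓ ≤ bergeDeg (insert e (sunEdges ℓ)) (Sum.inl i) := by
  have h := star_extend (sun_star_inl hℓ i) heE hi hi'
    (by simp [Ne.symm hii]) (by simp)
  have h2 := le_bergeDeg h
  omega

lemma part2_inr (hℓ : 5 ≤ ℓ) {e : Finset (SunV ℓ)} (j j' : Fin (ℓ - 1))
    (hje : Sum.inr j ∈ e) (hj'e : Sum.inr j' ∈ e) (h1 : j' ≠ j) (h2 : j' ≠ j + 1)
    (h3 : j ≠ j' + 1) (heE : e ∉ sunEdges ℓ) :
    ℓ ≤ bergeDeg (insert e (sunEdges ℓ)) (Sum.inr j) := by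
  have huN : (Sum.inr j' : SunV ℓ) ∉
      (univ : Finset (Fin (ℓ - 3))).image Sum.inl ∪ {Sum.inr (j - 1), Sum.inr (j + 1)} := by
    simp only [mem_union, mem_image, mem_univ, true_and, mem_insert, mem_singleton,
      Sum.inr.injEq, reduceCtorEq, not_or, exists_false, false_or]
    refine ⟨?_, ?_⟩
    · intro hc
      exact h3 ((fin_eq_sub_iff j j').mp hc)
    · exact h2
  have h := star_extend (sun_star_inr hℓ j) heE hje hj'e (by simp [h1]) huN
  have h2 := le_bergeDeg h
  omega

lemma mem_sun_of (hℓ : 5 ≤ ℓ) {e : Finset (SunV ℓ)} (he3 : e.card = 3)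
    (i : Fin (ℓ - 3)) (j : Fin (ℓ - 1)) (h1 : Sum.inl i ∈ e) (h2 : Sum.inr j ∈ e)
    (h3 : Sum.inr (j + 1) ∈ e) : e ∈ sunEdges ℓ := by
  have hn : 4 ≤ ℓ - 1 := by omega
  have hsubset : ({Sum.inl i, Sum.inr j, Sum.inr (j + 1)} : Finset (SunV ℓ)) ⊆ e := by
    intro x hx
    simp only [mem_insert, mem_singleton] at hx
    rcases hx with rfl | rfl | rfl <;> assumption
  have hcard3 : ({Sum.inl i, Sum.inr j, Sum.inr (j + 1)} : Finset (SunV ℓ)).card = 3 := by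
    rw [card_insert_of_notMem (by simp), card_insert_of_notMem
      (by simp [Ne.symm (fin_ne_add_one hn j)]), card_singleton]
  have heq := Finset.eq_of_subset_of_card_le hsubset (by rw [he3, hcard3])
  rw [← heq]
  exact mem_sunEdges.mpr ⟨i, j, rfl⟩

lemma case_one_inl (hℓ : 5 ≤ ℓ) {e : Finset (SunV ℓ)} (he3 : e.card = 3)
    (i : Fin (ℓ - 3)) (j j' : Fin (ℓ - 1)) (hie : Sum.inl i ∈ e) (hje : Sum.inr j ∈ e)
    (hj'e : Sum.inr j' ∈ e) (hjj : j ≠ j') (heE : e ∉ sunEdges ℓ) :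
    ∃ v : SunV ℓ, ℓ ≤ bergeDeg (insert e (sunEdges ℓ)) v := by
  rcases eq_or_ne j' (j + 1) with rfl | h2
  · exact absurd (mem_sun_of hℓ he3 i j hie hje hj'e) heE
  rcases eq_or_ne j (j' + 1) with rfl | h3
  · exact absurd (mem_sun_of hℓ he3 i j' hie hj'e hje) heE
  exact ⟨Sum.inr j, part2_inr hℓ j j' hje hj'e (Ne.symm hjj) h2 h3 heE⟩

lemma case_three_inr (hℓ : 5 ≤ ℓ) {e : Finset (SunV ℓ)} (j1 j2 j3 : Fin (ℓ - 1))
    (h1 : Sum.inr j1 ∈ e) (h2 : Sum.inr j2 ∈ e) (h3 : Sum.inr j3 ∈ e)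
    (h12 : j1 ≠ j2) (h13 : j1 ≠ j3) (h23 : j2 ≠ j3) (heE : e ∉ sunEdges ℓ) :
    ∃ v : SunV ℓ, ℓ ≤ bergeDeg (insert e (sunEdges ℓ)) v := by
  have hn : 4 ≤ ℓ - 1 := by omega
  obtain ⟨p, q, hp, hq, hqp, hq1, hp1⟩ := fin_triangle hn j1 j2 j3 h12 h13 h23
  have hpe : Sum.inr p ∈ e := by rcases hp with rfl | rfl | rfl <;> assumption
  have hqe : Sum.inr q ∈ e := by rcases hq with rfl | rfl | rfl <;> assumption
  exact ⟨Sum.inr p, part2_inr hℓ p q hpe hqe hqp hq1 hp1 heE⟩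

end Sun

theorem stmt5 (ℓ : ℕ) [NeZero (ℓ - 1)] (hℓ : 5 ≤ ℓ) :
    (∀ v : SunV ℓ, bergeDeg (sunEdges ℓ) v = ℓ - 1) ∧
    (∀ e : Finset (SunV ℓ), e.card = 3 → e ∉ sunEdges ℓ →
      ∃ v : SunV ℓ, ℓ ≤ bergeDeg (insert e (sunEdges ℓ)) v) := by
  constructor
  · intro v
    cases v with
    | inl i => exact bergeDeg_eq (sun_star_inl hℓ i).star (fun m hm => sun_ub hℓ _ hm)
    | inr j => exact bergeDeg_eq (sun_star_inr hℓ j).star (fun m hm => sun_ub hℓ _ hm)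
  · intro e he3 heE
    obtain ⟨a, b, c, hab, hac, hbc, rfl⟩ := Finset.card_eq_three.mp he3
    have he3' : ({a, b, c} : Finset (SunV ℓ)).card = 3 :=
      Finset.card_eq_three.mpr ⟨a, b, c, hab, hac, hbc, rfl⟩
    have ha : a ∈ ({a, b, c} : Finset (SunV ℓ)) := by simp
    have hb : b ∈ ({a, b, c} : Finset (SunV ℓ)) := by simp
    have hc : c ∈ ({a, b, c} : Finset (SunV ℓ)) := by simp
    rcases a with i1 | j1 <;> rcases b with i2 | j2 <;> rcases c with i3 | j3
    · exact ⟨Sum.inl i1, part2_inl hℓ i1 i2 (by simpa using hab) ha hb heE⟩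
    · exact ⟨Sum.inl i1, part2_inl hℓ i1 i2 (by simpa using hab) ha hb heE⟩
    · exact ⟨Sum.inl i1, part2_inl hℓ i1 i3 (by simpa using hac) ha hc heE⟩
    · exact case_one_inl hℓ he3' i1 j2 j3 ha hb hc (by simpa using hbc) heE
    · exact ⟨Sum.inl i2, part2_inl hℓ i2 i3 (by simpa using hbc) hb hc heE⟩
    · exact case_one_inl hℓ he3' i2 j1 j3 hb ha hc (by simpa using hac) heE
    · exact case_one_inl hℓ he3' i3 j1 j2 hc ha hb (by simpa using hab) heE
    · exact case_three_inr hℓ j1 j2 j3 ha hb hc (by simpa using hab) (by simpa using hac)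
        (by simpa using hbc) heE
end

section
/- For all ℓ ≥ 5, the complete 3-uniform hypergraph K_ℓ^{(3)} is aggressively Berge-K_{1,ℓ}-saturated. -/
open Finset

variable {V : Type} [DecidableEq V]

/-- The complete 3-uniform hypergraph `K_ℓ^{(3)}`: all 3-element subsets of `Fin ℓ`. -/
def completeEdges (ℓ : ℕ) : Finset (Finset (Fin ℓ)) :=
  Finset.powersetCard 3 Finset.univ


/-!
`K_ℓ^{(3)}` is saturated for the trivial reason that it has no non-edges, and every vertex `a`
already has Berge degree `ℓ - 1`, via the cyclic triples `{a, y i, y (i + 1)}` through the other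
vertices. For a saturated 3-graph `E` of that kind and any saturated `F`, a new edge of `E ⊔ F`
either lies on one side, where saturation of that side gives the star, or meets both sides, and
then its vertex on the other side is a fresh leaf extending a maximal star of `E` to a `K_{1,ℓ}`.
-/

open Function

theorem sumEdges_eq {W : Type} [DecidableEq W] (E : Finset (Finset V)) (F : Finset (Finset W)) :
    sumEdges E F = E.image (·.map Embedding.inl) ∪ F.image (·.map Embedding.inr) := rfl

theorem Finset.eq_map_inl_or_eq_map_inr_or_exists {α β : Type} (e : Finset (α ⊕ β)) :
    e = e.toLeft.map Embedding.inl ∨ e = e.toRight.map Embedding.inr ∨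
      ∃ a b, Sum.inl a ∈ e ∧ Sum.inr b ∈ e := by
  by_cases hR : e.toRight = ∅
  · left; rw [← disjSum_empty, ← hR, toLeft_disjSum_toRight]
  by_cases hL : e.toLeft = ∅
  · right; left; rw [← empty_disjSum, ← hL, toLeft_disjSum_toRight]
  obtain ⟨a, ha⟩ := nonempty_iff_ne_empty.mpr hL
  obtain ⟨b, hb⟩ := nonempty_iff_ne_empty.mpr hR
  exact Or.inr (Or.inr ⟨a, b, mem_toLeft.mp ha, mem_toRight.mp hb⟩)

namespace IsBergeStar

variable {α β : Type} {E E' : Finset (Finset α)} {v : α} {m : ℕ}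

theorem mono (h : E ⊆ E') (hs : IsBergeStar E v m) : IsBergeStar E' v m := by
  obtain ⟨y, f, hy, hf, hc⟩ := hs
  exact ⟨y, f, hy, hf, fun i => ⟨h (hc i).1, (hc i).2⟩⟩

theorem map [DecidableEq β] (emb : α ↪ β) (hs : IsBergeStar E v m) :
    IsBergeStar (E.image (·.map emb)) (emb v) m := by
  obtain ⟨y, f, hy, hf, hc⟩ := hs
  refine ⟨emb ∘ y, (·.map emb) ∘ f, emb.injective.comp hy, (map_injective emb).comp hf,
    fun i => ?_⟩
  obtain ⟨hfE, hvf, hyf, hyv⟩ := hc i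
  exact ⟨mem_image_of_mem _ hfE, mem_map_of_mem _ hvf, mem_map_of_mem _ hyf,
    emb.injective.ne hyv⟩

theorem of_map [DecidableEq β] (emb : α ↪ β) (hs : IsBergeStar (E.image (·.map emb)) (emb v) m) :
    IsBergeStar E v m := by
  obtain ⟨y, f, hy, hf, hc⟩ := hs
  choose g hgE hgf using fun i => mem_image.mp (hc i).1
  choose b hbg hby using fun i => mem_map.mp (hgf i ▸ (hc i).2.2.1)
  refine ⟨b, g, fun i j hij => hy (by rw [← hby, ← hby, hij]),
    fun i j hij => hf (by rw [← hgf, ← hgf, hij]), fun i => ⟨hgE i, ?_, hbg i, ?_⟩⟩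
  · exact (mem_map' emb).mp (hgf i ▸ (hc i).2.1)
  · rintro rfl
    exact (hc i).2.2.2 (hby i).symm

theorem of_union_left [DecidableEq α] {F : Finset (Finset α)} (hs : IsBergeStar (E ∪ F) v m)
    (hF : ∀ g ∈ F, v ∉ g) : IsBergeStar E v m := by
  obtain ⟨y, f, hy, hf, hc⟩ := hs
  exact ⟨y, f, hy, hf, fun i =>
    ⟨(mem_union.mp (hc i).1).resolve_right fun h => hF _ h (hc i).2.1, (hc i).2⟩⟩

theorem cons [DecidableEq α] {u : α} {e : Finset α} (hs : IsBergeStar E v m)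
    (hu : ∀ g ∈ E, u ∉ g) (hue : u ∈ e) (hve : v ∈ e) (huv : u ≠ v) :
    IsBergeStar (insert e E) v (m + 1) := by
  obtain ⟨y, f, hy, hf, hc⟩ := hs
  refine ⟨Fin.cons u y, Fin.cons e f, Fin.cons_injective_iff.mpr ⟨?_, hy⟩,
    Fin.cons_injective_iff.mpr ⟨?_, hf⟩,
    Fin.cases ⟨mem_insert_self _ _, hve, hue, huv⟩ fun i => ?_⟩
  · rintro ⟨i, rfl⟩
    exact hu _ (hc i).1 (hc i).2.2.1
  · rintro ⟨i, rfl⟩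
    exact hu _ (hc i).1 hue
  · simp only [Fin.cons_succ]
    exact ⟨mem_insert_of_mem (hc i).1, (hc i).2⟩

theorem lt_card [Fintype α] [DecidableEq α] (hs : IsBergeStar E v m) : m < Fintype.card α := by
  obtain ⟨y, _, hy, _, hc⟩ := hs
  have h := card_le_card_of_injOn y (s := univ) (t := univ.erase v)
    (fun i _ => mem_erase.mpr ⟨(hc i).2.2.2, mem_univ _⟩) hy.injOn
  rw [card_univ, Fintype.card_fin, card_erase_of_mem (mem_univ v), card_univ] at h
  have := Fintype.card_pos_iff.mpr ⟨v⟩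
  omega

theorem of_sumEdges_inl [DecidableEq α] [DecidableEq β] {F : Finset (Finset β)} {a : α}
    (hs : IsBergeStar (sumEdges E F) (Sum.inl a) m) : IsBergeStar E a m :=
  of_map Embedding.inl (hs.of_union_left (by simp))

theorem of_sumEdges_inr [DecidableEq α] [DecidableEq β] {F : Finset (Finset β)} {b : β}
    (hs : IsBergeStar (sumEdges E F) (Sum.inr b) m) : IsBergeStar F b m := by
  rw [sumEdges_eq, union_comm] at hs
  exact of_map Embedding.inr (hs.of_union_left (by simp))

end IsBergeStar

section Saturation

variable {α : Type} [DecidableEq α]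

theorem bergeFree_sumEdges {β : Type} [DecidableEq β] {E : Finset (Finset α)}
    {F : Finset (Finset β)} {ℓ : ℕ} (hE : BergeFree E ℓ) (hF : BergeFree F ℓ) :
    BergeFree (sumEdges E F) ℓ := by
  rintro (a | b) hs
  · exact hE a hs.of_sumEdges_inl
  · exact hF b hs.of_sumEdges_inr

theorem Saturated3.exists_isBergeStar_insert_map {β : Type} [DecidableEq β]
    {E : Finset (Finset α)} {E' : Finset (Finset β)} {ℓ : ℕ} (hE : Saturated3 E ℓ)
    (emb : α ↪ β) (hEE' : E.image (·.map emb) ⊆ E') {u : Finset α} (hu : u.card = 3)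
    (hu' : u.map emb ∉ E') : ∃ w, IsBergeStar (insert (u.map emb) E') w ℓ := by
  obtain ⟨w, hw⟩ := hE.2 u hu fun h => hu' (hEE' (mem_image_of_mem _ h))
  refine ⟨emb w, (hw.map emb).mono ?_⟩
  rw [image_insert]
  exact insert_subset_insert _ hEE'

theorem Saturated3.aggressive {E : Finset (Finset α)} {m : ℕ} (hE : Saturated3 E (m + 1))
    (hstar : ∀ v, IsBergeStar E v m) : Aggressive E (m + 1) := by
  intro W _ _ F _ hF
  refine ⟨bergeFree_sumEdges hE.1 hF.1, fun e he heE => ?_⟩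
  rcases e.eq_map_inl_or_eq_map_inr_or_exists with h | h | ⟨a, b, ha, hb⟩
  · rw [h] at he heE ⊢
    exact hE.exists_isBergeStar_insert_map _ subset_union_left (by simpa using he) heE
  · rw [h] at he heE ⊢
    exact hF.exists_isBergeStar_insert_map _ subset_union_right (by simpa using he) heE
  · refine ⟨.inl a, IsBergeStar.mono (insert_subset_insert _ subset_union_left) ?_⟩
    exact ((hstar a).map Embedding.inl).cons (by simp) hb ha Sum.inr_ne_inl

theorem isBergeStar_of_forall_triple_mem {E : Finset (Finset α)} {v : α} {m : ℕ}
    (y : Fin m → α) (hy : Injective y) (hyv : ∀ i, y i ≠ v) (σ : Fin m → Fin m)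
    (hσ : ∀ i, σ (σ i) ≠ i) (hE : ∀ i, {v, y i, y (σ i)} ∈ E) : IsBergeStar E v m := by
  refine ⟨y, fun i => {v, y i, y (σ i)}, hy, fun i j hij => ?_,
    fun i => ⟨hE i, by simp, by simp, hyv i⟩⟩
  dsimp only at hij
  by_contra hne
  have partner : ∀ {i j}, i ≠ j → y i ∈ ({v, y j, y (σ j)} : Finset α) → i = σ j := by
    intro i j hne h
    simp only [mem_insert, mem_singleton, hy.eq_iff] at h
    exact (h.resolve_left (hyv i)).resolve_left hne
  have hi : i = σ j := partner hne (hij ▸ by simp)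
  have hj : j = σ i := partner (Ne.symm hne) (hij ▸ by simp)
  exact hσ i (by rw [← hj, ← hi])

end Saturation

theorem Fin.add_one_add_one_ne {k : ℕ} (i : Fin (k + 3)) : i + 1 + 1 ≠ i := by
  rw [add_assoc, Ne, add_eq_left, Fin.ext_iff, Fin.val_add, Fin.val_one, Fin.val_zero,
    Nat.mod_eq_of_lt (by omega)]
  omega

theorem isBergeStar_completeEdges {k : ℕ} (a : Fin (k + 4)) :
    IsBergeStar (completeEdges (k + 4)) a (k + 3) := by
  refine isBergeStar_of_forall_triple_mem a.succAbove Fin.succAbove_right_injective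
    a.succAbove_ne (· + 1) Fin.add_one_add_one_ne fun i => ?_
  rw [completeEdges, mem_powersetCard_univ, card_eq_three]
  exact ⟨a, _, _, (a.succAbove_ne i).symm, (a.succAbove_ne _).symm,
    Fin.succAbove_right_injective.ne (by simp), rfl⟩

theorem saturated3_completeEdges (ℓ : ℕ) : Saturated3 (completeEdges ℓ) ℓ :=
  ⟨fun _ hs => hs.lt_card.ne (Fintype.card_fin ℓ).symm,
    fun _ he heE => absurd (mem_powersetCard_univ.mpr he) heE⟩

theorem stmt6 (ℓ : ℕ) (hℓ : 5 ≤ ℓ) : Aggressive (completeEdges ℓ) ℓ := by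
  obtain ⟨k, rfl⟩ : ∃ k, ℓ = k + 4 := ⟨ℓ - 4, by omega⟩
  exact (saturated3_completeEdges (k + 4)).aggressive isBergeStar_completeEdges
end

section
/- Let ℓ ≥ 5 and n > ℓ. Define f(a) = ⌈(ℓ−1)(n−a)/3⌉ + \binom{a}{3}. Then there exists a minimizer a* of f over {a ∈ [n] : \binom{a−1}{2} ≤ ℓ−2} satisfying a* = 3 if ℓ = 5, and 3 ≤ a* ≤ ℓ−3 if ℓ ≥ 6. -/
theorem stmt7 (ℓ n : ℕ) (h5 : 5 ≤ ℓ) (hn : ℓ < n) :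
    ∃ a ∈ (Finset.Icc 1 n).filter (fun a => Nat.choose (a - 1) 2 ≤ ℓ - 2),
      (∀ b ∈ (Finset.Icc 1 n).filter (fun a => Nat.choose (a - 1) 2 ≤ ℓ - 2),
          ((ℓ - 1) * (n - a) + 2) / 3 + Nat.choose a 3 ≤
            ((ℓ - 1) * (n - b) + 2) / 3 + Nat.choose b 3) ∧
      (ℓ = 5 → a = 3) ∧ (6 ≤ ℓ → 3 ≤ a ∧ a ≤ ℓ - 3) := by
  by_cases h7 : 7 ≤ ℓ
  · -- case ℓ ≥ 7
    set S := (Finset.Icc 1 n).filter (fun a => Nat.choose (a - 1) 2 ≤ ℓ - 2) with hS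
    set T := S.filter (fun a => 3 ≤ a) with hT
    have h3S : 3 ∈ S := by
      simp only [hS, Finset.mem_filter, Finset.mem_Icc]
      refine ⟨⟨by omega, by omega⟩, ?_⟩
      norm_num
      omega
    have h3T : 3 ∈ T := by
      simp only [hT, Finset.mem_filter]
      exact ⟨h3S, le_refl 3⟩
    obtain ⟨a, haT, hmin⟩ := T.exists_min_image
      (fun b => ((ℓ - 1) * (n - b) + 2) / 3 + Nat.choose b 3) ⟨3, h3T⟩
    have haS : a ∈ S := (Finset.mem_filter.mp haT).1
    have ha3 : 3 ≤ a := (Finset.mem_filter.mp haT).2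
    have key3 : ∀ b, b = 1 ∨ b = 2 →
        ((ℓ - 1) * (n - 3) + 2) / 3 + Nat.choose 3 3 ≤
          ((ℓ - 1) * (n - b) + 2) / 3 + Nat.choose b 3 := by
      intro b hb
      have e2 : (ℓ - 1) * (n - 2) = (ℓ - 1) * (n - 3) + (ℓ - 1) := by
        have h : n - 2 = (n - 3) + 1 := by omega
        rw [h, Nat.mul_add, Nat.mul_one]
      have e1 : (ℓ - 1) * (n - 1) = (ℓ - 1) * (n - 3) + 2 * (ℓ - 1) := by
        have h : n - 1 = (n - 3) + 2 := by omega
        rw [h, Nat.mul_add]; ring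
      have hL : 6 ≤ ℓ - 1 := by omega
      rcases hb with rfl | rfl
      · rw [e1]
        simp only [Nat.choose_self, Nat.choose_succ_self_right]
        norm_num
        generalize (ℓ - 1) * (n - 3) = X at *
        omega
      · rw [e2]
        norm_num
        generalize (ℓ - 1) * (n - 3) = X at *
        omega
    refine ⟨a, haS, ?_, ?_, ?_⟩
    · intro b hbS
      by_cases hb3 : 3 ≤ b
      · exact hmin b (Finset.mem_filter.mpr ⟨hbS, hb3⟩)
      · have hb1 : 1 ≤ b := by
          have := (Finset.mem_filter.mp hbS).1
          exact (Finset.mem_Icc.mp this).1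
        have := hmin 3 h3T
        calc ((ℓ - 1) * (n - a) + 2) / 3 + Nat.choose a 3
            ≤ ((ℓ - 1) * (n - 3) + 2) / 3 + Nat.choose 3 3 := this
          _ ≤ _ := key3 b (by omega)
    · intro h; omega
    · intro _
      refine ⟨ha3, ?_⟩
      have hc : Nat.choose (a - 1) 2 ≤ ℓ - 2 := (Finset.mem_filter.mp haS).2
      by_contra hcon
      have hale : ℓ - 2 ≤ a := by omega
      have h1 : Nat.choose (ℓ - 3) 2 ≤ Nat.choose (a - 1) 2 :=
        Nat.choose_le_choose 2 (by omega)
      rw [Nat.choose_two_right] at h1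
      have h2 : (ℓ - 3) - 1 = ℓ - 4 := by omega
      rw [h2] at h1
      have h3 : 4 * (ℓ - 4) ≤ (ℓ - 3) * (ℓ - 4) :=
        Nat.mul_le_mul_right (ℓ - 4) (by omega)
      generalize hX : (ℓ - 3) * (ℓ - 4) = X at *
      omega
  · -- case ℓ = 5 or ℓ = 6
    have hl : ℓ = 5 ∨ ℓ = 6 := by omega
    refine ⟨3, ?_, ?_, ?_, ?_⟩
    · simp only [Finset.mem_filter, Finset.mem_Icc]
      refine ⟨⟨by omega, by omega⟩, ?_⟩
      norm_num
      omega
    · intro b hb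
      simp only [Finset.mem_filter, Finset.mem_Icc] at hb
      obtain ⟨⟨hb1, hbn⟩, hbc⟩ := hb
      have hb4 : b ≤ 4 := by
        by_contra hcon
        have : Nat.choose 4 2 ≤ Nat.choose (b - 1) 2 :=
          Nat.choose_le_choose 2 (by omega)
        have h6 : Nat.choose 4 2 = 6 := by decide
        omega
      rcases hl with rfl | rfl <;> interval_cases b <;> norm_num <;> omega
    · intro _; rfl
    · intro h; omega
end

section
/- In a Berge-K_{1,5}-free 3-uniform hypergraph G, every non-isolated vertex v satisfies 2 ≤ |N(v)| ≤ 8 and d(v) ≤ 6; moreover, if d(v) = 6 then the link L(v) is isomorphic to K_4, and if d(v) = 5 then L(v) is isomorphic to K_4 minus one edge. -/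
open Finset

variable {V : Type} [DecidableEq V]

/-- `K_4` minus one edge (the edge between `0` and `1`). -/
def K4minus : SimpleGraph (Fin 4) :=
  SimpleGraph.fromRel (fun x y => ¬(x = 0 ∧ y = 1) ∧ ¬(x = 1 ∧ y = 0))

/-!
The hyperedges through `v`, with `v` removed, form a family of `d(v)` distinct pairs whose union
is `N(v)`, and a Berge `K_{1,5}` centred at `v` is a system of distinct representatives for five
of these pairs. By Hall's theorem, five pairs without one contain a subfamily spanning fewer
points than it has members; since `k` points carry at most `k.choose 2` pairs, this forces the
five pairs to span exactly four points. So once `d(v) ≥ 5` all pairs lie in one 4-set, whence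
`d(v) ≤ 6`, `|N(v)| = 4`, and the link is `K_4` with at most one edge missing; when `d(v) ≤ 4`,
`|N(v)| ≤ 2 d(v) ≤ 8`.
-/

section DistinctReps

variable {α : Type*} [DecidableEq α]

def HasDistinctReps (P : Finset (Finset α)) (m : ℕ) : Prop :=
  ∃ (p : Fin m → Finset α) (y : Fin m → α),
    Function.Injective p ∧ Function.Injective y ∧ ∀ i, p i ∈ P ∧ y i ∈ p i

lemma hasDistinctReps_of_hall {P S : Finset (Finset α)} (hS : S ⊆ P)
    (hall : ∀ T ⊆ S, T.card ≤ (T.biUnion id).card) : HasDistinctReps P S.card := by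
  have hall' (s : Finset S) : s.card ≤ (s.biUnion Subtype.val).card := by
    have h := hall (s.image Subtype.val) fun p hp => by
      obtain ⟨q, -, rfl⟩ := mem_image.1 hp
      exact q.2
    rwa [card_image_of_injective _ Subtype.val_injective, image_biUnion] at h
  obtain ⟨y, hy, hyp⟩ := (all_card_le_biUnion_card_iff_exists_injective _).1 hall'
  let e : Fin S.card ≃ S := S.equivFin.symm
  exact ⟨fun i => e i, y ∘ e, Subtype.val_injective.comp e.injective, hy.comp e.injective,
    fun i => ⟨hS (e i).2, hyp (e i)⟩⟩

lemma card_le_choose_card_biUnion {T : Finset (Finset α)} {r : ℕ}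
    (hT : ∀ p ∈ T, p.card = r) : T.card ≤ (T.biUnion id).card.choose r := by
  rw [← card_powersetCard]
  exact card_le_card fun p hp => mem_powersetCard.2 ⟨subset_biUnion_of_mem id hp, hT p hp⟩

variable {P : Finset (Finset α)}

lemma lt_card_biUnion_of_choose_lt {r k : ℕ} (hP : ∀ p ∈ P, p.card = r)
    (hk : k.choose r < P.card) : k < (P.biUnion id).card := by
  by_contra! h
  have := (card_le_choose_card_biUnion hP).trans (Nat.choose_le_choose r h)
  omega

lemma card_biUnion_eq_four_of_card_eq_five (hP : ∀ p ∈ P, p.card = 2)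
    (hreps : ¬ HasDistinctReps P 5) {S : Finset (Finset α)} (hS : S ⊆ P) (hS5 : S.card = 5) :
    (S.biUnion id).card = 4 := by
  obtain ⟨T, hTS, hT⟩ : ∃ T ⊆ S, (T.biUnion id).card < T.card := by
    by_contra! hall
    exact hreps (hS5 ▸ hasDistinctReps_of_hall hS hall)
  have hTle : T.card ≤ 5 := hS5 ▸ card_le_card hTS
  have hTchoose := card_le_choose_card_biUnion fun p hp => hP p (hS (hTS hp))
  obtain ⟨hT4, hT5⟩ : (T.biUnion id).card = 4 ∧ T.card = 5 := by
    generalize (T.biUnion id).card = n at hT hTchoose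
    have hn : n ≤ 4 := by omega
    rw [Nat.choose_two_right] at hTchoose
    interval_cases n <;> omega
  rwa [← eq_of_subset_of_card_le hTS (by omega)]

/-- Any five of the pairs span the same four points: dropping one of them leaves four pairs,
which already span four points. -/
lemma card_biUnion_eq_four (hP : ∀ p ∈ P, p.card = 2) (hreps : ¬ HasDistinctReps P 5)
    (h5 : 5 ≤ P.card) : (P.biUnion id).card = 4 := by
  obtain ⟨S, hSP, hS5⟩ := exists_subset_card_eq h5
  have hA := card_biUnion_eq_four_of_card_eq_five hP hreps hSP hS5
  obtain ⟨p, hp⟩ := card_pos.1 (by omega : 0 < S.card)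
  have hS4 : (S.erase p).card = 4 := by rw [card_erase_of_mem hp, hS5]
  have hspan : 4 ≤ ((S.erase p).biUnion id).card :=
    lt_card_biUnion_of_choose_lt (r := 2) (k := 3)
      (fun q hq => hP q (hSP (mem_of_mem_erase hq))) (by simp [hS4, Nat.choose])
  have hsub : P.biUnion id ⊆ S.biUnion id := by
    intro x hx
    obtain ⟨q, hqP, hxq⟩ := mem_biUnion.1 hx
    by_cases hqS : q ∈ S
    · exact mem_biUnion.2 ⟨q, hqS, hxq⟩
    have hq : q ∉ S.erase p := fun h => hqS (mem_of_mem_erase h)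
    have hS' : (insert q (S.erase p)).card = 5 := by rw [card_insert_of_notMem hq, hS4]
    have hA' := card_biUnion_eq_four_of_card_eq_five hP hreps
      (insert_subset hqP ((erase_subset p S).trans hSP)) hS'
    have h1 : (S.erase p).biUnion id = S.biUnion id :=
      eq_of_subset_of_card_le (biUnion_subset_biUnion_of_subset_left id (erase_subset p S))
        (by omega)
    have h2 : (S.erase p).biUnion id = (insert q (S.erase p)).biUnion id :=
      eq_of_subset_of_card_le (biUnion_subset_biUnion_of_subset_left id (subset_insert q _))
        (by omega)
    rw [← h1, h2]
    exact mem_biUnion.2 ⟨q, mem_insert_self q _, hxq⟩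
  have := card_le_card (biUnion_subset_biUnion_of_subset_left id hSP)
  have := card_le_card hsub
  omega

end DistinctReps

lemma Finset.pair_eq_pair_iff_sym2 {α : Type*} [DecidableEq α] {x y a b : α} :
    ({x, y} : Finset α) = {a, b} ↔ s(x, y) = s(a, b) := by
  rw [← coe_inj, coe_pair, coe_pair, Set.pair_eq_pair_iff, Sym2.eq_iff]

lemma exists_equiv_apply_eq_apply_eq {α β : Type*} [DecidableEq β] (σ : α ≃ β) {a b : α}
    (hab : a ≠ b) {a' b' : β} (hab' : a' ≠ b') : ∃ e : α ≃ β, e a = a' ∧ e b = b' := by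
  set τ := σ.trans (Equiv.swap (σ a) a')
  have hτa : τ a = a' := by simp [τ]
  have hτb : τ b ≠ a' := hτa ▸ τ.injective.ne hab.symm
  refine ⟨τ.trans (Equiv.swap (τ b) b'), ?_, by simp⟩
  simp [hτa, Equiv.swap_apply_of_ne_of_ne hτb.symm hab']

lemma nonempty_iso_top_deleteEdges {α β : Type*} [Fintype α] [Fintype β] [DecidableEq β]
    (hcard : Fintype.card α = Fintype.card β) {a b : α} (hab : a ≠ b) {a' b' : β}
    (hab' : a' ≠ b') :
    Nonempty ((⊤ : SimpleGraph α).deleteEdges {s(a, b)} ≃g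
      (⊤ : SimpleGraph β).deleteEdges {s(a', b')}) := by
  obtain ⟨e, rfl, rfl⟩ := exists_equiv_apply_eq_apply_eq (Fintype.equivOfCardEq hcard) hab hab'
  exact ⟨⟨e, by simp⟩⟩

lemma K4minus_eq_top_deleteEdges : K4minus = (⊤ : SimpleGraph (Fin 4)).deleteEdges {s(0, 1)} := by
  ext i j
  simp only [K4minus, SimpleGraph.fromRel_adj, SimpleGraph.deleteEdges_adj, SimpleGraph.top_adj,
    Set.mem_singleton_iff, Sym2.eq_iff]
  tauto

section Link

variable {E : Finset (Finset V)} {v : V}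

variable (E v) in
def linkPairs : Finset (Finset V) := (E.filter (v ∈ ·)).image (·.erase v)

lemma mem_linkPairs {p : Finset V} :
    p ∈ linkPairs E v ↔ ∃ e ∈ E, v ∈ e ∧ e.erase v = p := by
  simp [linkPairs, and_assoc]

lemma card_of_mem_linkPairs (hU : Uniform3 E) {p : Finset V} (hp : p ∈ linkPairs E v) :
    p.card = 2 := by
  obtain ⟨e, he, hve, rfl⟩ := mem_linkPairs.1 hp
  rw [card_erase_of_mem hve, hU e he]

lemma insert_mem_of_mem_linkPairs {p : Finset V} (hp : p ∈ linkPairs E v) : insert v p ∈ E := by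
  obtain ⟨e, he, hve, rfl⟩ := mem_linkPairs.1 hp
  rwa [insert_erase hve]

lemma notMem_of_mem_linkPairs {p : Finset V} (hp : p ∈ linkPairs E v) : v ∉ p := by
  obtain ⟨e, -, -, rfl⟩ := mem_linkPairs.1 hp
  exact notMem_erase v e

lemma card_linkPairs : (linkPairs E v).card = hdeg E v :=
  card_image_of_injOn fun e₁ h₁ e₂ h₂ h => by
    rw [← insert_erase (mem_filter.1 h₁).2, ← insert_erase (mem_filter.1 h₂).2]
    exact congrArg (insert v) h

lemma nbr_eq_biUnion_linkPairs : nbr E v = (linkPairs E v).biUnion id := by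
  ext x
  simp only [nbr, mem_erase, mem_biUnion, mem_filter, id, mem_linkPairs]
  constructor
  · rintro ⟨hxv, e, ⟨he, hve⟩, hxe⟩
    exact ⟨e.erase v, ⟨e, he, hve, rfl⟩, mem_erase.2 ⟨hxv, hxe⟩⟩
  · rintro ⟨p, ⟨e, he, hve, rfl⟩, hxp⟩
    exact ⟨(mem_erase.1 hxp).1, e, ⟨he, hve⟩, mem_of_mem_erase hxp⟩

lemma pair_mem_linkPairs_iff {x y : V} (hx : x ≠ v) (hy : y ≠ v) :
    {x, y} ∈ linkPairs E v ↔ {v, x, y} ∈ E := by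
  refine ⟨insert_mem_of_mem_linkPairs, fun h =>
    mem_linkPairs.2 ⟨_, h, mem_insert_self v _, erase_insert (by simp [hx.symm, hy.symm])⟩⟩

lemma linkGraph_adj_s9 {x y : nbr E v} :
    (linkGraph E v).Adj x y ↔ x ≠ y ∧ {x.1, y.1} ∈ linkPairs E v := by
  have hx : x.1 ≠ v := ne_of_mem_erase x.2
  have hy : y.1 ≠ v := ne_of_mem_erase y.2
  rw [linkGraph, SimpleGraph.fromRel_adj, ← pair_mem_linkPairs_iff hx hy,
    ← pair_mem_linkPairs_iff hy hx, pair_comm y.1, or_self]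

lemma isBergeStar_of_hasDistinctReps {m : ℕ} (h : HasDistinctReps (linkPairs E v) m) :
    IsBergeStar E v m := by
  obtain ⟨p, y, hp, hy, hpy⟩ := h
  refine ⟨y, fun i => insert v (p i), hy, fun i j hij => hp ?_, fun i => ?_⟩
  · have hvi := notMem_of_mem_linkPairs (hpy i).1
    have hvj := notMem_of_mem_linkPairs (hpy j).1
    rw [← erase_insert hvi, ← erase_insert hvj]
    exact congrArg (·.erase v) hij
  · exact ⟨insert_mem_of_mem_linkPairs (hpy i).1, mem_insert_self v _,
      mem_insert_of_mem (hpy i).2, fun h => notMem_of_mem_linkPairs (hpy i).1 (h ▸ (hpy i).2)⟩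

lemma linkGraph_eq_top (h : (nbr E v).powersetCard 2 ⊆ linkPairs E v) : linkGraph E v = ⊤ := by
  ext x y
  rw [linkGraph_adj_s9, SimpleGraph.top_adj, and_iff_left_iff_imp]
  intro hxy
  refine h (mem_powersetCard.2 ⟨?_, card_pair (Subtype.coe_ne_coe.2 hxy)⟩)
  simp [insert_subset_iff]

lemma linkGraph_eq_deleteEdges {a b : nbr E v}
    (h : linkPairs E v = ((nbr E v).powersetCard 2).erase {a.1, b.1}) :
    linkGraph E v = (⊤ : SimpleGraph (nbr E v)).deleteEdges {s(a, b)} := by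
  ext x y
  have hpair : ({x.1, y.1} : Finset V) = {a.1, b.1} ↔ s(x, y) = s(a, b) := by
    simp only [Finset.pair_eq_pair_iff_sym2, Sym2.eq_iff, Subtype.ext_iff]
  simp only [linkGraph_adj_s9, h, mem_erase, mem_powersetCard, SimpleGraph.deleteEdges_adj,
    SimpleGraph.top_adj, Set.mem_singleton_iff, ne_eq, hpair]
  refine ⟨fun ⟨hxy, hab, _⟩ => ⟨hxy, hab⟩, fun ⟨hxy, hab⟩ => ⟨hxy, hab, ?_, ?_⟩⟩
  · simp [insert_subset_iff]
  · exact card_pair (Subtype.coe_ne_coe.2 hxy)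

lemma linkPairs_subset_powersetCard (hU : Uniform3 E) :
    linkPairs E v ⊆ (nbr E v).powersetCard 2 := fun _ hp =>
  mem_powersetCard.2 ⟨nbr_eq_biUnion_linkPairs (E := E) ▸ subset_biUnion_of_mem id hp,
    card_of_mem_linkPairs hU hp⟩

lemma two_le_card_nbr (hU : Uniform3 E) (hv : ∃ e ∈ E, v ∈ e) : 2 ≤ (nbr E v).card := by
  obtain ⟨e, he, hve⟩ := hv
  have hp : e.erase v ∈ linkPairs E v := mem_linkPairs.2 ⟨e, he, hve, rfl⟩
  rw [← card_of_mem_linkPairs hU hp]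
  exact card_le_card (mem_powersetCard.1 (linkPairs_subset_powersetCard hU hp)).1

lemma card_nbr_eq_four (hU : Uniform3 E) (hfree : ¬ IsBergeStar E v 5)
    (h5 : 5 ≤ hdeg E v) : (nbr E v).card = 4 := by
  rw [nbr_eq_biUnion_linkPairs]
  exact card_biUnion_eq_four (fun _ => card_of_mem_linkPairs hU)
    (fun h => hfree (isBergeStar_of_hasDistinctReps h)) (by rwa [card_linkPairs])

lemma card_nbr_le_eight (hU : Uniform3 E) (hfree : ¬ IsBergeStar E v 5) :
    (nbr E v).card ≤ 8 := by
  by_cases h5 : 5 ≤ hdeg E v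
  · rw [card_nbr_eq_four hU hfree h5]; omega
  calc (nbr E v).card ≤ ∑ p ∈ linkPairs E v, p.card := by
        rw [nbr_eq_biUnion_linkPairs]; exact card_biUnion_le
    _ = hdeg E v * 2 := by rw [sum_const_nat fun _ => card_of_mem_linkPairs hU, card_linkPairs]
    _ ≤ 8 := by omega

lemma hdeg_le_six (hU : Uniform3 E) (hfree : ¬ IsBergeStar E v 5) : hdeg E v ≤ 6 := by
  by_contra! h
  have := card_le_card (linkPairs_subset_powersetCard (v := v) hU)
  rw [card_powersetCard, card_nbr_eq_four hU hfree (by omega), card_linkPairs] at this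
  simp [Nat.choose] at this
  omega

lemma linkGraph_eq_top_of_hdeg_eq_six (hU : Uniform3 E) (hfree : ¬ IsBergeStar E v 5)
    (h6 : hdeg E v = 6) : linkGraph E v = ⊤ := by
  refine linkGraph_eq_top (eq_of_subset_of_card_le (linkPairs_subset_powersetCard hU) ?_).ge
  rw [card_powersetCard, card_nbr_eq_four hU hfree (by omega), card_linkPairs, h6]
  rfl

lemma exists_linkGraph_eq_deleteEdges_of_hdeg_eq_five (hU : Uniform3 E)
    (hfree : ¬ IsBergeStar E v 5) (h5 : hdeg E v = 5) :
    ∃ a b : nbr E v, a ≠ b ∧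
      linkGraph E v = (⊤ : SimpleGraph (nbr E v)).deleteEdges {s(a, b)} := by
  have hcard : (linkPairs E v).card + 1 = ((nbr E v).powersetCard 2).card := by
    rw [card_powersetCard, card_nbr_eq_four hU hfree (by omega), card_linkPairs, h5]; rfl
  obtain ⟨m, hm, hinsert⟩ :=
    exists_eq_insert_iff.2 ⟨linkPairs_subset_powersetCard hU, hcard⟩
  obtain ⟨hmN, hm2⟩ := mem_powersetCard.1 (hinsert ▸ mem_insert_self m _)
  obtain ⟨a, b, hab, rfl⟩ := card_eq_two.1 hm2
  refine ⟨⟨a, hmN (by simp)⟩, ⟨b, hmN (by simp)⟩, by simpa using hab,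
    linkGraph_eq_deleteEdges ?_⟩
  rw [← hinsert, erase_insert hm]

end Link

theorem stmt9 (E : Finset (Finset V)) (hU : Uniform3 E)
    (hfree : ∀ w : V, ¬ IsBergeStar E w 5)
    (v : V) (hv : ∃ e ∈ E, v ∈ e) :
    2 ≤ (nbr E v).card ∧ (nbr E v).card ≤ 8 ∧ hdeg E v ≤ 6 ∧
    (hdeg E v = 6 → Nonempty (linkGraph E v ≃g SimpleGraph.completeGraph (Fin 4))) ∧
    (hdeg E v = 5 → Nonempty (linkGraph E v ≃g K4minus)) := by
  refine ⟨two_le_card_nbr hU hv, card_nbr_le_eight hU (hfree v), hdeg_le_six hU (hfree v),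
    fun h6 => ?_, fun h5 => ?_⟩
  · rw [linkGraph_eq_top_of_hdeg_eq_six hU (hfree v) h6]
    exact ⟨.completeGraph ((nbr E v).equivFinOfCardEq
      (card_nbr_eq_four hU (hfree v) (by omega)))⟩
  · obtain ⟨a, b, hab, hG⟩ := exists_linkGraph_eq_deleteEdges_of_hdeg_eq_five hU (hfree v) h5
    rw [hG, K4minus_eq_top_deleteEdges]
    exact nonempty_iso_top_deleteEdges (by simp [card_nbr_eq_four hU (hfree v) (by omega)]) hab
      Fin.zero_ne_one
end

section
/- Let G be a Berge-K_{1,5}-free 3-uniform hypergraph and u, v distinct vertices. Then deg_{L(u)}(v) = deg_{L(v)}(u). Moreover, for a vertex v: if L(v) contains a vertex of degree 1 then d(v) ≤ 4; if L(v) contains a vertex of degree 2 then d(v) ≤ 5; if L(v) contains a vertex of degree 4 then d(v) ≤ 4. -/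
open Finset

variable {V : Type} [DecidableEq V]

/-- The degree of `x` in the link graph `L(v)`: the number of vertices `y` with
`{v,x,y} ∈ E`. -/
def linkDeg [Fintype V] (E : Finset (Finset V)) (v x : V) : ℕ :=
  (Finset.univ.filter (fun y => y ≠ v ∧ y ≠ x ∧ ({v, x, y} : Finset V) ∈ E)).card

lemma choose_aux {k n : ℕ} (hk : k ≤ 4) (h : k ≤ n.choose 2) : k ≤ n := by
  rcases le_or_gt n 4 with hn | hn
  · interval_cases n <;> simp [Nat.choose] at h ⊢ <;> omega
  · omega

lemma hall4 (t : Fin 4 → Finset V) (h2 : ∀ i, (t i).card = 2)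
    (hinj : Function.Injective t) :
    ∃ g : Fin 4 → V, Function.Injective g ∧ ∀ i, g i ∈ t i := by
  rw [← Finset.all_card_le_biUnion_card_iff_exists_injective]
  intro s
  have hmap : ∀ i ∈ s, t i ∈ (s.biUnion t).powersetCard 2 := by
    intro i hi
    rw [Finset.mem_powersetCard]
    exact ⟨Finset.subset_biUnion_of_mem t hi, h2 i⟩
  have hle : s.card ≤ ((s.biUnion t).powersetCard 2).card :=
    Finset.card_le_card_of_injOn t hmap (fun a _ b _ h => hinj h)
  rw [Finset.card_powersetCard] at hle
  have hs4 : s.card ≤ 4 := le_trans (Finset.card_le_univ s) (by simp)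
  exact choose_aux hs4 hle

lemma link_card [Fintype V] (E : Finset (Finset V)) (hU : Uniform3 E) (v x : V)
    (hvx : v ≠ x) :
    (E.filter (fun e => v ∈ e ∧ x ∈ e)).card = linkDeg E v x := by
  rw [linkDeg]
  symm
  apply Finset.card_bij (fun y _ => ({v, x, y} : Finset V))
  · intro y hy
    simp only [Finset.mem_filter, Finset.mem_univ, true_and] at hy
    simp only [Finset.mem_filter]
    refine ⟨hy.2.2, by simp, by simp⟩
  · intro y hy y' hy' h
    simp only [Finset.mem_filter, Finset.mem_univ, true_and] at hy hy'
    have : y' ∈ ({v, x, y} : Finset V) := by rw [h]; simp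
    simp only [Finset.mem_insert, Finset.mem_singleton] at this
    rcases this with h1 | h1 | h1
    · exact absurd h1 hy'.1
    · exact absurd h1 hy'.2.1
    · exact h1.symm
  · intro e he
    simp only [Finset.mem_filter] at he
    obtain ⟨heE, hv, hx⟩ := he
    have hc3 : e.card = 3 := hU e heE
    have hxe : x ∈ e.erase v := Finset.mem_erase.2 ⟨hvx.symm, hx⟩
    have hc1 : ((e.erase v).erase x).card = 1 := by
      rw [Finset.card_erase_of_mem hxe, Finset.card_erase_of_mem hv, hc3]
    obtain ⟨y, hy⟩ := Finset.card_eq_one.1 hc1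
    have hyy : y ∈ (e.erase v).erase x := by rw [hy]; simp
    have hynx : y ≠ x := (Finset.mem_erase.1 hyy).1
    have hynv : y ≠ v := (Finset.mem_erase.1 (Finset.mem_erase.1 hyy).2).1
    have hee : ({v, x, y} : Finset V) = e := by
      have h1 : insert x ((e.erase v).erase x) = e.erase v :=
        Finset.insert_erase hxe
      have h2 : insert v (e.erase v) = e := Finset.insert_erase hv
      rw [show ({v, x, y} : Finset V) = insert v (insert x {y}) from rfl, ← hy, h1, h2]
    refine ⟨y, ?_, hee⟩
    simp only [Finset.mem_filter, Finset.mem_univ, true_and]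
    exact ⟨hynv, hynx, hee ▸ heE⟩

lemma erase_card_two (E : Finset (Finset V)) (hU : Uniform3 E) {v : V} {e : Finset V}
    (he : e ∈ E) (hv : v ∈ e) : (e.erase v).card = 2 := by
  rw [Finset.card_erase_of_mem hv, hU e he]

lemma hdeg_split [Fintype V] (E : Finset (Finset V)) (hU : Uniform3 E) (v x : V)
    (hvx : v ≠ x) :
    linkDeg E v x + (E.filter (fun e => v ∈ e ∧ x ∉ e)).card = hdeg E v := by
  have := Finset.card_filter_add_card_filter_not
    (s := E.filter (fun e => v ∈ e)) (p := fun e => x ∈ e)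
  rw [Finset.filter_filter, Finset.filter_filter] at this
  rw [hdeg, ← this, link_card E hU v x hvx]

lemma case12 [Fintype V] (E : Finset (Finset V)) (hU : Uniform3 E) (v x : V)
    (hxv : x ≠ v) (hL : 1 ≤ linkDeg E v x)
    (hd : linkDeg E v x + 4 ≤ hdeg E v) : IsBergeStar E v 5 := by
  have hvx : v ≠ x := hxv.symm
  -- an edge through v and x
  have hSx : (E.filter (fun e => v ∈ e ∧ x ∈ e)).Nonempty := by
    rw [← Finset.card_pos, link_card E hU v x hvx]; omega
  obtain ⟨e0, he0⟩ := hSx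
  simp only [Finset.mem_filter] at he0
  obtain ⟨he0E, hve0, hxe0⟩ := he0
  -- four edges through v avoiding x
  have hS' : 4 ≤ (E.filter (fun e => v ∈ e ∧ x ∉ e)).card := by
    have := hdeg_split E hU v x hvx; omega
  obtain ⟨T, hTsub, hTcard⟩ := Finset.exists_subset_card_eq hS'
  let φ := Finset.equivFinOfCardEq hTcard
  set f4 : Fin 4 → Finset V := fun i => ((φ.symm i : T) : Finset V) with hf4
  have hf4inj : Function.Injective f4 := by
    intro i j h
    exact φ.symm.injective (Subtype.ext h)
  have hf4mem : ∀ i, f4 i ∈ E ∧ v ∈ f4 i ∧ x ∉ f4 i := by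
    intro i
    have : f4 i ∈ T := (φ.symm i).2
    have := hTsub this
    simpa using this
  set t : Fin 4 → Finset V := fun i => (f4 i).erase v with ht
  have ht2 : ∀ i, (t i).card = 2 := fun i =>
    erase_card_two E hU (hf4mem i).1 (hf4mem i).2.1
  have htinj : Function.Injective t := by
    intro i j h
    apply hf4inj
    rw [← Finset.insert_erase (hf4mem i).2.1, ← Finset.insert_erase (hf4mem j).2.1]
    exact congrArg (insert v) h
  obtain ⟨g, hginj, hgmem⟩ := hall4 t ht2 htinj
  have hgf : ∀ i, g i ∈ f4 i := fun i => Finset.erase_subset _ _ (hgmem i)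
  have hgv : ∀ i, g i ≠ v := fun i => (Finset.mem_erase.1 (hgmem i)).1
  refine ⟨Fin.cons x g, Fin.cons e0 f4, ?_, ?_, ?_⟩
  · rw [Fin.cons_injective_iff]
    refine ⟨?_, hginj⟩
    rintro ⟨i, rfl⟩
    exact (hf4mem i).2.2 (hgf i)
  · rw [Fin.cons_injective_iff]
    refine ⟨?_, hf4inj⟩
    rintro ⟨i, rfl⟩
    exact (hf4mem i).2.2 hxe0
  · intro i
    refine Fin.cases ?_ ?_ i
    · simpa using ⟨he0E, hve0, hxe0, hxv⟩
    · intro j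
      simpa using ⟨(hf4mem j).1, (hf4mem j).2.1, hgf j, hgv j⟩

lemma case4 [Fintype V] (E : Finset (Finset V)) (hU : Uniform3 E) (v x : V)
    (hxv : x ≠ v) (hL : linkDeg E v x = 4) (hd : 5 ≤ hdeg E v) : IsBergeStar E v 5 := by
  have hvx : v ≠ x := hxv.symm
  -- the four link neighbors of x
  have hNcard : (Finset.univ.filter
      (fun y => y ≠ v ∧ y ≠ x ∧ ({v, x, y} : Finset V) ∈ E)).card = 4 := hL
  let ψ := Finset.equivFinOfCardEq hNcard
  set w : Fin 4 → V := fun i => ((ψ.symm i : _) : V) with hw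
  have hwinj : Function.Injective w := fun i j h =>
    ψ.symm.injective (Subtype.ext h)
  have hwmem : ∀ i, w i ≠ v ∧ w i ≠ x ∧ ({v, x, w i} : Finset V) ∈ E := by
    intro i
    have : w i ∈ Finset.univ.filter
        (fun y => y ≠ v ∧ y ≠ x ∧ ({v, x, y} : Finset V) ∈ E) := (ψ.symm i).2
    simpa using this
  -- an edge through v avoiding x
  have hS' : 1 ≤ (E.filter (fun e => v ∈ e ∧ x ∉ e)).card := by
    have := hdeg_split E hU v x hvx; omega
  obtain ⟨e, he⟩ := Finset.card_pos.1 hS'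
  simp only [Finset.mem_filter] at he
  obtain ⟨heE, hve, hxe⟩ := he
  have hec : (e.erase v).Nonempty := by
    rw [← Finset.card_pos, erase_card_two E hU heE hve]; omega
  obtain ⟨p, hp⟩ := hec
  have hpe : p ∈ e := Finset.mem_of_mem_erase hp
  have hpv : p ≠ v := (Finset.mem_erase.1 hp).1
  have hpx : p ≠ x := fun h => hxe (h ▸ hpe)
  set ytail : Fin 4 → V := fun i => if w i = p then x else w i with hyt
  refine ⟨Fin.cons p ytail, Fin.cons e (fun i => ({v, x, w i} : Finset V)), ?_, ?_, ?_⟩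
  · rw [Fin.cons_injective_iff]
    constructor
    · rintro ⟨i, hi⟩
      simp only [hyt] at hi
      split_ifs at hi with h
      · exact hpx hi.symm
      · exact h hi
    · intro i j h
      simp only [hyt] at h
      split_ifs at h with h1 h2 h2
      · exact hwinj (h1.trans h2.symm)
      · exact absurd h.symm (hwmem j).2.1
      · exact absurd h (hwmem i).2.1
      · exact hwinj h
  · rw [Fin.cons_injective_iff]
    constructor
    · rintro ⟨i, hi⟩
      apply hxe
      rw [← hi]; simp
    · intro i j h
      apply hwinj
      have h' : ({v, x, w i} : Finset V) = ({v, x, w j} : Finset V) := h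
      have : w i ∈ ({v, x, w j} : Finset V) := by rw [← h']; simp
      simp only [Finset.mem_insert, Finset.mem_singleton] at this
      rcases this with h1 | h1 | h1
      · exact absurd h1 (hwmem i).1
      · exact absurd h1 (hwmem i).2.1
      · exact h1
  · intro i
    refine Fin.cases ?_ ?_ i
    · simpa using ⟨heE, hve, hpe, hpv⟩
    · intro j
      simp only [Fin.cons_succ]
      refine ⟨(hwmem j).2.2, by simp, ?_, ?_⟩
      · simp only [hyt]; split_ifs <;> simp
      · simp only [hyt]; split_ifs with h
        · exact hxv
        · exact (hwmem j).1

theorem stmt10 [Fintype V] (E : Finset (Finset V)) (hU : Uniform3 E)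
    (hfree : ∀ w : V, ¬ IsBergeStar E w 5) :
    (∀ u v : V, u ≠ v → linkDeg E u v = linkDeg E v u) ∧
    (∀ v : V,
      ((∃ x ∈ nbr E v, linkDeg E v x = 1) → hdeg E v ≤ 4) ∧
      ((∃ x ∈ nbr E v, linkDeg E v x = 2) → hdeg E v ≤ 5) ∧
      ((∃ x ∈ nbr E v, linkDeg E v x = 4) → hdeg E v ≤ 4)) := by
  constructor
  · intro u v huv
    unfold linkDeg
    congr 1
    ext y
    simp only [Finset.mem_filter, Finset.mem_univ, true_and]
    rw [Finset.insert_comm]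
    tauto
  · intro v
    refine ⟨?_, ?_, ?_⟩
    · rintro ⟨x, hx, hL⟩
      by_contra h
      push_neg at h
      have hxv : x ≠ v := Finset.ne_of_mem_erase hx
      exact hfree v (case12 E hU v x hxv (by omega) (by omega))
    · rintro ⟨x, hx, hL⟩
      by_contra h
      push_neg at h
      have hxv : x ≠ v := Finset.ne_of_mem_erase hx
      exact hfree v (case12 E hU v x hxv (by omega) (by omega))
    · rintro ⟨x, hx, hL⟩
      by_contra h
      push_neg at h
      have hxv : x ≠ v := Finset.ne_of_mem_erase hx
      exact hfree v (case4 E hU v x hxv hL (by omega))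
end

section
/- Let G be a Berge-K_{1,5}-saturated 3-uniform hypergraph. If a and a' are two vertices of degree 6 that are contained in a common edge, then their connected component is isomorphic to the complete 3-graph K_5^{(3)}. -/
open Finset

variable {V : Type} [DecidableEq V]

lemma star_from_finset (E : Finset (Finset V)) (v : V) (F5 : Finset (Finset V))
    (h5 : F5.card = 5) (y : Finset V → V)
    (hm : ∀ e ∈ F5, e ∈ E ∧ v ∈ e ∧ y e ∈ e ∧ y e ≠ v)
    (hinj : ∀ e ∈ F5, ∀ e' ∈ F5, y e = y e' → e = e') :
    IsBergeStar E v 5 := by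
  let σ := (F5.equivFinOfCardEq h5).symm
  refine ⟨fun i => y ((σ i : Finset V)), fun i => (σ i : Finset V), ?_, ?_, ?_⟩
  · intro i j h
    have h2 : (σ i : Finset V) = (σ j : Finset V) := hinj _ (σ i).2 _ (σ j).2 h
    exact σ.injective (Subtype.ext h2)
  · intro i j h
    exact σ.injective (Subtype.ext h)
  · intro i
    exact hm _ (σ i).2

lemma deg6_structure (E : Finset (Finset V)) (hU : Uniform3 E) (hfree : BergeFree E 5)
    (a : V) (h6 : hdeg E a = 6) :
    ∃ N : Finset V, N.card = 4 ∧ a ∉ N ∧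
      (∀ e ∈ E, a ∈ e → e ⊆ insert a N) ∧
      (∀ p : Finset V, p ⊆ N → p.card = 2 → insert a p ∈ E) := by
  classical
  set F : Finset (Finset V) := E.filter (fun e => a ∈ e) with hFdef
  have hF6 : F.card = 6 := h6
  have hmemF : ∀ e ∈ F, e ∈ E ∧ a ∈ e := by
    intro e he; exact Finset.mem_filter.mp he
  have hins : ∀ e ∈ F, insert a (e.erase a) = e := fun e he =>
    Finset.insert_erase (hmemF e he).2
  have herase_inj : ∀ e ∈ F, ∀ e' ∈ F, e.erase a = e'.erase a → e = e' := by
    intro e he e' he' h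
    rw [← hins e he, ← hins e' he', h]
  have hcard2 : ∀ e ∈ F, (e.erase a).card = 2 := by
    intro e he
    rw [Finset.card_erase_of_mem (hmemF e he).2, hU e (hmemF e he).1]
  set N : Finset V := F.biUnion (fun e => e.erase a) with hNdef
  have haN : a ∉ N := by
    simp [hNdef]
  have hsubN : ∀ e ∈ F, e.erase a ⊆ N := by
    intro e he
    rw [hNdef]
    exact Finset.subset_biUnion_of_mem (fun e => e.erase a) he
  have hPcard : (F.image (fun e => e.erase a)).card = 6 := by
    rw [Finset.card_image_of_injOn herase_inj, hF6]
  have hPsub : F.image (fun e => e.erase a) ⊆ N.powersetCard 2 := by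
    intro p hp
    obtain ⟨e, he, rfl⟩ := Finset.mem_image.mp hp
    exact Finset.mem_powersetCard.mpr ⟨hsubN e he, hcard2 e he⟩
  have hNge : 4 ≤ N.card := by
    by_contra h
    push_neg at h
    have h1 := Finset.card_le_card hPsub
    rw [hPcard, Finset.card_powersetCard] at h1
    have h3 : N.card ≤ 3 := by omega
    have := Nat.choose_le_choose 2 h3
    simp [Nat.choose] at this
    omega
  have hNle : N.card ≤ 4 := by
    by_contra hcon
    push_neg at hcon
    set t : {e // e ∈ F} → Finset (Option V) :=
      fun e => insert none ((e.1.erase a).image some) with htdef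
    have hall : ∀ s : Finset {e // e ∈ F}, s.card ≤ (s.biUnion t).card := by
      intro s
      rcases s.eq_empty_or_nonempty with rfl | hs
      · simp
      set s' : Finset (Finset V) := s.image (fun e => e.1) with hs'def
      have hs'card : s'.card = s.card :=
        Finset.card_image_of_injective _ Subtype.val_injective
      have hs'F : s' ⊆ F := by
        intro e he
        obtain ⟨⟨e', he'⟩, _, rfl⟩ := Finset.mem_image.mp he
        exact he'
      set U : Finset V := s'.biUnion (fun e => e.erase a) with hUdef
      have hbi : s.biUnion t = insert none (U.image some) := by
        ext o
        simp only [Finset.mem_biUnion, htdef, hUdef, hs'def, Finset.mem_insert,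
          Finset.mem_image]
        constructor
        · rintro ⟨e, he, ho⟩
          rcases ho with rfl | ⟨z, hz, rfl⟩
          · exact Or.inl rfl
          · exact Or.inr ⟨z, ⟨e.1, ⟨e, he, rfl⟩, hz⟩, rfl⟩
        · rintro (rfl | ⟨z, ⟨e, ⟨e', he', rfl⟩, hz⟩, rfl⟩)
          · obtain ⟨e, he⟩ := hs
            exact ⟨e, he, Or.inl rfl⟩
          · exact ⟨e', he', Or.inr ⟨z, hz, rfl⟩⟩
      have hjoin : (s.biUnion t).card = U.card + 1 := by
        rw [hbi, Finset.card_insert_of_notMem (by simp),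
          Finset.card_image_of_injective _ (Option.some_injective V)]
      have hUcount : s'.card ≤ Nat.choose U.card 2 := by
        have hsubU : s'.image (fun e => e.erase a) ⊆ U.powersetCard 2 := by
          intro p hp
          obtain ⟨e, he, rfl⟩ := Finset.mem_image.mp hp
          refine Finset.mem_powersetCard.mpr ⟨?_, hcard2 e (hs'F he)⟩
          rw [hUdef]
          exact Finset.subset_biUnion_of_mem (fun e => e.erase a) he
        have h1 := Finset.card_le_card hsubU
        rwa [Finset.card_image_of_injOn
          (fun e he e' he' h => herase_inj e (hs'F he) e' (hs'F he') h),
          Finset.card_powersetCard] at h1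
      rw [hjoin, ← hs'card]
      by_contra hc
      push_neg at hc
      have hs6 : s'.card ≤ 6 := hF6 ▸ Finset.card_le_card hs'F
      have hU4 : U.card ≤ 4 := by omega
      have hkey : U.card = 4 ∧ s'.card = 6 := by
        interval_cases h : U.card <;> simp_all [Nat.choose] <;> omega
      have hs'eq : s' = F :=
        Finset.eq_of_subset_of_card_le hs'F (by omega)
      have hUN : U = N := by rw [hUdef, hs'eq]
      rw [hUN] at hkey
      omega
    obtain ⟨g, hginj, hgmem⟩ :=
      (Finset.all_card_le_biUnion_card_iff_exists_injective t).mp hall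
    set B : Finset (Finset V) := F.filter (fun e => ∀ h : e ∈ F, g ⟨e, h⟩ = none)
      with hBdef
    have hB1 : B.card ≤ 1 := by
      apply Finset.card_le_one.mpr
      intro e he e' he'
      rw [hBdef, Finset.mem_filter] at he he'
      have h1 : g ⟨e, he.1⟩ = g ⟨e', he'.1⟩ := by rw [he.2 he.1, he'.2 he'.1]
      exact congrArg Subtype.val (hginj h1)
    have h5 : 5 ≤ (F \ B).card := by
      have := Finset.le_card_sdiff B F
      omega
    obtain ⟨F5, hF5sub, hF5card⟩ := Finset.exists_subset_card_eq h5
    set yfun : Finset V → V :=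
      fun e => if h : e ∈ F then (g ⟨e, h⟩).getD a else a with hyfun
    have hkey : ∀ e, ∀ he : e ∈ F, e ∈ F5 →
        ∃ z, z ∈ e.erase a ∧ yfun e = z ∧ g ⟨e, he⟩ = some z := by
      intro e heF he
      have heB : e ∉ B := (Finset.mem_sdiff.mp (hF5sub he)).2
      have hne : g ⟨e, heF⟩ ≠ none := by
        intro hnone
        exact heB (Finset.mem_filter.mpr ⟨heF, fun _ => hnone⟩)
      have hmem := hgmem ⟨e, heF⟩
      rw [htdef] at hmem
      simp only [Finset.mem_insert, Finset.mem_image] at hmem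
      rcases hmem with h | ⟨w, hw, hws⟩
      · exact absurd h hne
      · exact ⟨w, hw, by simp [hyfun, heF, ← hws], hws.symm⟩
    have hFof : ∀ e ∈ F5, e ∈ F := fun e he => (Finset.mem_sdiff.mp (hF5sub he)).1
    exact hfree a (star_from_finset E a F5 hF5card yfun
      (by
        intro e he
        have heF : e ∈ F := hFof e he
        obtain ⟨z, hzmem, hyz, _⟩ := hkey e heF he
        rw [hyz]
        exact ⟨(hmemF e heF).1, (hmemF e heF).2, Finset.mem_of_mem_erase hzmem,
          Finset.ne_of_mem_erase hzmem⟩)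
      (by
        intro e he e' he' hyy
        have heF : e ∈ F := hFof e he
        have heF' : e' ∈ F := hFof e' he'
        obtain ⟨z, hzmem, hyz, hgz⟩ := hkey e heF he
        obtain ⟨z', hzmem', hyz', hgz'⟩ := hkey e' heF' he'
        have hzz : z = z' := by rw [← hyz, ← hyz', hyy]
        have hgg : g ⟨e, heF⟩ = g ⟨e', heF'⟩ := by rw [hgz, hgz', hzz]
        exact congrArg Subtype.val (hginj hgg)))
  have hNcard : N.card = 4 := le_antisymm hNle hNge
  have hPeq : F.image (fun e => e.erase a) = N.powersetCard 2 := by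
    apply Finset.eq_of_subset_of_card_le hPsub
    rw [Finset.card_powersetCard, hNcard, hPcard]
    norm_num [Nat.choose]
  refine ⟨N, hNcard, haN, ?_, ?_⟩
  · intro e he hae
    have heF : e ∈ F := Finset.mem_filter.mpr ⟨he, hae⟩
    intro x hx
    rcases eq_or_ne x a with rfl | hxa
    · exact Finset.mem_insert_self _ _
    · exact Finset.mem_insert_of_mem (hsubN e heF (Finset.mem_erase.mpr ⟨hxa, hx⟩))
  · intro p hp hp2
    have hmem : p ∈ N.powersetCard 2 := Finset.mem_powersetCard.mpr ⟨hp, hp2⟩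
    rw [← hPeq] at hmem
    obtain ⟨e, heF, rfl⟩ := Finset.mem_image.mp hmem
    rw [hins e heF]
    exact (hmemF e heF).1

lemma star5 {E : Finset (Finset V)} {v : V} (y0 y1 y2 y3 y4 : V) (f0 f1 f2 f3 f4 : Finset V)
    (hy01 : y0 ≠ y1) (hy02 : y0 ≠ y2) (hy03 : y0 ≠ y3) (hy04 : y0 ≠ y4)
    (hy12 : y1 ≠ y2) (hy13 : y1 ≠ y3) (hy14 : y1 ≠ y4)
    (hy23 : y2 ≠ y3) (hy24 : y2 ≠ y4) (hy34 : y3 ≠ y4)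
    (hf01 : f0 ≠ f1) (hf02 : f0 ≠ f2) (hf03 : f0 ≠ f3) (hf04 : f0 ≠ f4)
    (hf12 : f1 ≠ f2) (hf13 : f1 ≠ f3) (hf14 : f1 ≠ f4)
    (hf23 : f2 ≠ f3) (hf24 : f2 ≠ f4) (hf34 : f3 ≠ f4)
    (h0 : f0 ∈ E ∧ v ∈ f0 ∧ y0 ∈ f0 ∧ y0 ≠ v)
    (h1 : f1 ∈ E ∧ v ∈ f1 ∧ y1 ∈ f1 ∧ y1 ≠ v)
    (h2 : f2 ∈ E ∧ v ∈ f2 ∧ y2 ∈ f2 ∧ y2 ≠ v)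
    (h3 : f3 ∈ E ∧ v ∈ f3 ∧ y3 ∈ f3 ∧ y3 ≠ v)
    (h4 : f4 ∈ E ∧ v ∈ f4 ∧ y4 ∈ f4 ∧ y4 ≠ v) :
    IsBergeStar E v 5 := by
  refine ⟨![y0, y1, y2, y3, y4], ![f0, f1, f2, f3, f4], ?_, ?_, ?_⟩
  · intro i j h
    fin_cases i <;> fin_cases j <;> simp_all
  · intro i j h
    fin_cases i <;> fin_cases j <;> simp_all
  · intro i
    fin_cases i <;> simp_all

theorem stmt11 (E : Finset (Finset V)) (hU : Uniform3 E) (hsat : Saturated3 E 5)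
    (a a' : V) (hne : a ≠ a') (h6 : hdeg E a = 6) (h6' : hdeg E a' = 6)
    (hcommon : ∃ e ∈ E, a ∈ e ∧ a' ∈ e) :
    ∃ S : Finset V, S.card = 5 ∧ a ∈ S ∧ a' ∈ S ∧
      (∀ e ∈ E, (∃ x ∈ e, x ∈ S) → e ⊆ S) ∧
      (∀ e : Finset V, e ⊆ S → e.card = 3 → e ∈ E) := by
  classical
  obtain ⟨hfree, hsatur⟩ := hsat
  obtain ⟨N, hN4, haN, hNa, hNpair⟩ := deg6_structure E hU hfree a h6
  obtain ⟨N₂, hN₂4, haN₂, hNa', hN₂pair⟩ := deg6_structure E hU hfree a' h6'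
  obtain ⟨e₀, he₀E, hae₀, ha'e₀⟩ := hcommon
  set S : Finset V := insert a N with hSdef
  have hS5 : S.card = 5 := by
    rw [hSdef, Finset.card_insert_of_notMem haN, hN4]
  have ha'N : a' ∈ N := by
    have h := hNa e₀ he₀E hae₀ ha'e₀
    rcases Finset.mem_insert.mp h with h1 | h1
    · exact absurd h1.symm hne
    · exact h1
  have haS : a ∈ S := Finset.mem_insert_self _ _
  have ha'S : a' ∈ S := Finset.mem_insert_of_mem ha'N
  have hSsub : S ⊆ insert a' N₂ := by
    intro z hz
    rcases eq_or_ne z a' with rfl | hza'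
    · exact Finset.mem_insert_self _ _
    rcases Finset.mem_insert.mp hz with rfl | hzN
    · exact hNa' e₀ he₀E ha'e₀ hae₀
    · have hpair : ({a', z} : Finset V) ⊆ N := by
        intro w hw
        rcases Finset.mem_insert.mp hw with rfl | hw
        · exact ha'N
        · rw [Finset.mem_singleton.mp hw]; exact hzN
      have hcard : ({a', z} : Finset V).card = 2 :=
        Finset.card_pair (Ne.symm hza')
      have hE : insert a ({a', z} : Finset V) ∈ E := hNpair _ hpair hcard
      have hsub := hNa' _ hE (by simp)
      exact hsub (by simp)
  have hSeq : insert a' N₂ = S :=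
    (Finset.eq_of_subset_of_card_le hSsub
      (by rw [Finset.card_insert_of_notMem haN₂, hN₂4, hS5])).symm
  have hN₂eq : N₂ = S.erase a' := by
    rw [← hSeq, Finset.erase_insert haN₂]
  have hNeq : N = S.erase a := by
    rw [hSdef, Finset.erase_insert haN]
  have hB : ∀ e ∈ E, ∀ x ∈ e, x ∈ S → e ⊆ S := by
    intro e he x hxe hxS
    by_contra hcon
    obtain ⟨yv, hyve, hyvS⟩ := Finset.not_subset.mp hcon
    rcases eq_or_ne x a with rfl | hxa
    · exact hyvS (hSdef ▸ hNa e he hxe hyve)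
    rcases eq_or_ne x a' with rfl | hxa'
    · exact hyvS (hSeq ▸ hNa' e he hxe hyve)
    have hxN : x ∈ N := by
      rcases Finset.mem_insert.mp hxS with h | h
      · exact absurd h hxa
      · exact h
    have hxea : x ∈ N.erase a' := Finset.mem_erase.mpr ⟨hxa', hxN⟩
    have hcardT : ((N.erase a').erase x).card = 2 := by
      rw [Finset.card_erase_of_mem hxea, Finset.card_erase_of_mem ha'N, hN4]
    obtain ⟨u, v, huv, hT⟩ := Finset.card_eq_two.mp hcardT
    have huT : u ∈ (N.erase a').erase x := by rw [hT]; simp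
    have hvT : v ∈ (N.erase a').erase x := by rw [hT]; simp
    have hux : u ≠ x := (Finset.mem_erase.mp huT).1
    have hua' : u ≠ a' := (Finset.mem_erase.mp (Finset.mem_of_mem_erase huT)).1
    have huN : u ∈ N := Finset.mem_of_mem_erase (Finset.mem_of_mem_erase huT)
    have hvx : v ≠ x := (Finset.mem_erase.mp hvT).1
    have hva' : v ≠ a' := (Finset.mem_erase.mp (Finset.mem_of_mem_erase hvT)).1
    have hvN : v ∈ N := Finset.mem_of_mem_erase (Finset.mem_of_mem_erase hvT)
    have hau : a ≠ u := fun h => haN (h ▸ huN)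
    have hav : a ≠ v := fun h => haN (h ▸ hvN)
    have ha'x : a' ≠ x := Ne.symm hxa'
    have hyvA : yv ∉ S := hyvS
    have hyva : yv ≠ a := fun h => hyvA (h ▸ haS)
    have hyva' : yv ≠ a' := fun h => hyvA (h ▸ ha'S)
    have hyvx : yv ≠ x := fun h => hyvA (h ▸ hxS)
    have hyvu : yv ≠ u := fun h => hyvA (h ▸ Finset.mem_insert_of_mem huN)
    have hyvv : yv ≠ v := fun h => hyvA (h ▸ Finset.mem_insert_of_mem hvN)
    -- the four edges inside S
    have hf0 : insert a ({a', x} : Finset V) ∈ E := by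
      apply hNpair
      · intro w hw
        rcases Finset.mem_insert.mp hw with rfl | hw
        · exact ha'N
        · rw [Finset.mem_singleton.mp hw]; exact hxN
      · exact Finset.card_pair ha'x
    have hf1 : insert a ({x, u} : Finset V) ∈ E := by
      apply hNpair
      · intro w hw
        rcases Finset.mem_insert.mp hw with rfl | hw
        · exact hxN
        · rw [Finset.mem_singleton.mp hw]; exact huN
      · exact Finset.card_pair (Ne.symm hux)
    have hf2 : insert a ({x, v} : Finset V) ∈ E := by
      apply hNpair
      · intro w hw
        rcases Finset.mem_insert.mp hw with rfl | hw
        · exact hxN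
        · rw [Finset.mem_singleton.mp hw]; exact hvN
      · exact Finset.card_pair (Ne.symm hvx)
    have hf3 : insert a' ({x, u} : Finset V) ∈ E := by
      apply hN₂pair
      · intro w hw
        rw [hN₂eq]
        rcases Finset.mem_insert.mp hw with rfl | hw
        · exact Finset.mem_erase.mpr ⟨hxa', hxS⟩
        · rw [Finset.mem_singleton.mp hw]
          exact Finset.mem_erase.mpr ⟨hua', Finset.mem_insert_of_mem huN⟩
      · exact Finset.card_pair (Ne.symm hux)
    -- edges are subsets of S or contain yv
    have hf0S : (insert a ({a', x} : Finset V) : Finset V) ⊆ S := by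
      intro w hw
      rcases Finset.mem_insert.mp hw with rfl | hw
      · exact haS
      rcases Finset.mem_insert.mp hw with rfl | hw
      · exact ha'S
      · rw [Finset.mem_singleton.mp hw]; exact hxS
    have hf1S : (insert a ({x, u} : Finset V) : Finset V) ⊆ S := by
      intro w hw
      rcases Finset.mem_insert.mp hw with rfl | hw
      · exact haS
      rcases Finset.mem_insert.mp hw with rfl | hw
      · exact hxS
      · rw [Finset.mem_singleton.mp hw]; exact Finset.mem_insert_of_mem huN
    have hf2S : (insert a ({x, v} : Finset V) : Finset V) ⊆ S := by
      intro w hw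
      rcases Finset.mem_insert.mp hw with rfl | hw
      · exact haS
      rcases Finset.mem_insert.mp hw with rfl | hw
      · exact hxS
      · rw [Finset.mem_singleton.mp hw]; exact Finset.mem_insert_of_mem hvN
    have hf3S : (insert a' ({x, u} : Finset V) : Finset V) ⊆ S := by
      intro w hw
      rcases Finset.mem_insert.mp hw with rfl | hw
      · exact ha'S
      rcases Finset.mem_insert.mp hw with rfl | hw
      · exact hxS
      · rw [Finset.mem_singleton.mp hw]; exact Finset.mem_insert_of_mem huN
    refine hfree x (star5 a' a v u yv
      (insert a {a', x}) (insert a {x, u}) (insert a {x, v}) (insert a' {x, u}) e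
      (Ne.symm hne) hva'.symm hua'.symm (Ne.symm hyva') hav hau (Ne.symm hyva)
      huv.symm (Ne.symm hyvv) (Ne.symm hyvu)
      ?_ ?_ ?_ ?_ ?_ ?_ ?_ ?_ ?_ ?_
      ⟨hf0, by simp, by simp, ha'x⟩
      ⟨hf1, by simp, by simp, Ne.symm hxa⟩
      ⟨hf2, by simp, by simp, hvx⟩
      ⟨hf3, by simp, by simp, hux⟩
      ⟨he, hxe, hyve, hyvx⟩)
    · intro h
      have h2 : a' ∈ insert a ({x, u} : Finset V) := h ▸ (by simp)
      simp only [Finset.mem_insert, Finset.mem_singleton] at h2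
      rcases h2 with h2 | h2 | h2
      · exact hne h2.symm
      · exact hxa' h2.symm
      · exact hua' h2.symm
    · intro h
      have h2 : a' ∈ insert a ({x, v} : Finset V) := h ▸ (by simp)
      simp only [Finset.mem_insert, Finset.mem_singleton] at h2
      rcases h2 with h2 | h2 | h2
      · exact hne h2.symm
      · exact hxa' h2.symm
      · exact hva' h2.symm
    · intro h
      have h2 : a ∈ insert a' ({x, u} : Finset V) := h.symm ▸ (by simp)
      simp only [Finset.mem_insert, Finset.mem_singleton] at h2
      rcases h2 with h2 | h2 | h2
      · exact hne h2
      · exact hxa h2.symm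
      · exact hau h2
    · intro h
      exact hyvS (hf0S (h ▸ hyve))
    · intro h
      have h2 : u ∈ insert a ({x, v} : Finset V) := h ▸ (by simp)
      simp only [Finset.mem_insert, Finset.mem_singleton] at h2
      rcases h2 with h2 | h2 | h2
      · exact hau h2.symm
      · exact hux h2
      · exact huv h2
    · intro h
      have h2 : a ∈ insert a' ({x, u} : Finset V) := h.symm ▸ (by simp)
      simp only [Finset.mem_insert, Finset.mem_singleton] at h2
      rcases h2 with h2 | h2 | h2
      · exact hne h2
      · exact hxa h2.symm
      · exact hau h2
    · intro h
      exact hyvS (hf1S (h ▸ hyve))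
    · intro h
      have h2 : v ∈ insert a' ({x, u} : Finset V) := h ▸ (by simp)
      simp only [Finset.mem_insert, Finset.mem_singleton] at h2
      rcases h2 with h2 | h2 | h2
      · exact hva' h2
      · exact hvx h2
      · exact huv h2.symm
    · intro h
      exact hyvS (hf2S (h ▸ hyve))
    · intro h
      exact hyvS (hf3S (h ▸ hyve))
  -- the last triple
  have hT0card : (N.erase a').card = 3 := by
    rw [Finset.card_erase_of_mem ha'N, hN4]
  have hT0S : N.erase a' ⊆ S :=
    fun z hz => Finset.mem_insert_of_mem (Finset.mem_of_mem_erase hz)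
  have hT0E : N.erase a' ∈ E := by
    by_contra hcon
    obtain ⟨w, y, f, hyinj, hfinj, hprop⟩ := hsatur (N.erase a') hT0card hcon
    by_cases hwT : w ∈ N.erase a'
    · have hwS : w ∈ S := hT0S hwT
      have hsub : ∀ i, y i ∈ S.erase w := by
        intro i
        obtain ⟨hfE, hwf, hyf, hyw⟩ := hprop i
        have hfS : f i ⊆ S := by
          rcases Finset.mem_insert.mp hfE with h | hfE'
          · rw [h]; exact hT0S
          · exact hB _ hfE' w hwf hwS
        exact Finset.mem_erase.mpr ⟨hyw, hfS hyf⟩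
      have himg : (Finset.univ.image y) ⊆ S.erase w := by
        intro z hz
        obtain ⟨i, _, rfl⟩ := Finset.mem_image.mp hz
        exact hsub i
      have h5le : 5 ≤ (S.erase w).card := by
        calc 5 = (Finset.univ.image y).card := by
              rw [Finset.card_image_of_injective _ hyinj, Finset.card_univ,
                Fintype.card_fin]
          _ ≤ _ := Finset.card_le_card himg
      rw [Finset.card_erase_of_mem hwS, hS5] at h5le
      omega
    · apply hfree w
      refine ⟨y, f, hyinj, hfinj, fun i => ?_⟩
      obtain ⟨hfE, hwf, hyf, hyw⟩ := hprop i
      rcases Finset.mem_insert.mp hfE with h | h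
      · exact absurd (h ▸ hwf) hwT
      · exact ⟨h, hwf, hyf, hyw⟩
  refine ⟨S, hS5, haS, ha'S, ?_, ?_⟩
  · rintro e he ⟨x, hxe, hxS⟩
    exact hB e he x hxe hxS
  · intro e heS he3
    by_cases hae : a ∈ e
    · have hsub : e.erase a ⊆ N := by
        rw [hNeq]
        intro z hz
        exact Finset.mem_erase.mpr ⟨(Finset.mem_erase.mp hz).1,
          heS (Finset.mem_of_mem_erase hz)⟩
      have hE := hNpair _ hsub (by rw [Finset.card_erase_of_mem hae, he3])
      rwa [Finset.insert_erase hae] at hE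
    by_cases hae' : a' ∈ e
    · have hsub : e.erase a' ⊆ N₂ := by
        rw [hN₂eq]
        intro z hz
        exact Finset.mem_erase.mpr ⟨(Finset.mem_erase.mp hz).1,
          heS (Finset.mem_of_mem_erase hz)⟩
      have hE := hN₂pair _ hsub (by rw [Finset.card_erase_of_mem hae', he3])
      rwa [Finset.insert_erase hae'] at hE
    · have hsub : e ⊆ N.erase a' := by
        intro z hz
        refine Finset.mem_erase.mpr ⟨fun h => hae' (h ▸ hz), ?_⟩
        rw [hNeq]
        exact Finset.mem_erase.mpr ⟨fun h => hae (h ▸ hz), heS hz⟩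
      have heq := Finset.eq_of_subset_of_card_le hsub (by rw [hT0card, he3])
      rw [heq]
      exact hT0E
end

section
/- The broken lantern B (a 3-uniform hypergraph on 10 vertices with 15 edges) is Berge-K_{1,5}-saturated: every vertex has Berge degree at most 4, and adding any 3-element non-edge creates a vertex of Berge degree at least 5. -/
open Finset

variable {V : Type} [DecidableEq V]

/-- The broken lantern `B` on 10 vertices, with
`a₁ = 0, a₂ = 1, v₁ = 2, v₂ = 3, x₁ = 4, x₂ = 5, x₃ = 6, y₁ = 7, y₂ = 8, y₃ = 9`:
edges `a₁v₁v₂`, `x₁x₂x₃`, `y₁y₂y₃`, all `a_i x_j x_{j'}` and all `v_i y_j y_{j'}`. -/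
def brokenLantern : Finset (Finset (Fin 10)) :=
  { {0, 2, 3}, {4, 5, 6}, {7, 8, 9},
    {0, 4, 5}, {0, 4, 6}, {0, 5, 6}, {1, 4, 5}, {1, 4, 6}, {1, 5, 6},
    {2, 7, 8}, {2, 7, 9}, {2, 8, 9}, {3, 7, 8}, {3, 7, 9}, {3, 8, 9} }



lemma mk5' (e f0 f1 f2 f3 : Finset (Fin 10)) (v w y0 y1 y2 y3 : Fin 10)
    (hne : e ∉ brokenLantern) (hv : v ∈ e) (hw : w ∈ e)
    (hd : (f0 ∈ brokenLantern ∧ v ∈ f0 ∧ y0 ∈ f0 ∧ y0 ≠ v)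
        ∧ (f1 ∈ brokenLantern ∧ v ∈ f1 ∧ y1 ∈ f1 ∧ y1 ≠ v)
        ∧ (f2 ∈ brokenLantern ∧ v ∈ f2 ∧ y2 ∈ f2 ∧ y2 ≠ v)
        ∧ (f3 ∈ brokenLantern ∧ v ∈ f3 ∧ y3 ∈ f3 ∧ y3 ≠ v)
        ∧ (y0≠y1 ∧ y0≠y2 ∧ y0≠y3 ∧ y0≠w ∧ y1≠y2 ∧ y1≠y3 ∧ y1≠w ∧ y2≠y3 ∧ y2≠w ∧ y3≠w)
        ∧ (f0≠f1 ∧ f0≠f2 ∧ f0≠f3 ∧ f1≠f2 ∧ f1≠f3 ∧ f2≠f3)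
        ∧ w ≠ v) :
    IsBergeStar (insert e brokenLantern) v 5 := by
  obtain ⟨⟨m0,v0,e0,n0⟩,⟨m1,v1,e1,n1⟩,⟨m2,v2,e2,n2⟩,⟨m3,v3,e3,n3⟩,
    ⟨a01,a02,a03,a0w,a12,a13,a1w,a23,a2w,a3w⟩,⟨b01,b02,b03,b12,b13,b23⟩,hwv⟩ := hd
  have g0 : f0 ≠ e := fun h => hne (h ▸ m0)
  have g1 : f1 ≠ e := fun h => hne (h ▸ m1)
  have g2 : f2 ≠ e := fun h => hne (h ▸ m2)
  have g3 : f3 ≠ e := fun h => hne (h ▸ m3)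
  refine ⟨fun i => [y0,y1,y2,y3,w].get i, fun i => [f0,f1,f2,f3,e].get i, ?_, ?_, ?_⟩
  · intro i j hij
    fin_cases i <;> fin_cases j <;>
      first
        | rfl
        | exact absurd hij (by assumption)
        | exact absurd hij.symm (by assumption)
  · intro i j hij
    fin_cases i <;> fin_cases j <;>
      first
        | rfl
        | exact absurd hij (by assumption)
        | exact absurd hij.symm (by assumption)
  · intro i
    fin_cases i
    · exact ⟨Finset.mem_insert_of_mem m0, v0, e0, n0⟩
    · exact ⟨Finset.mem_insert_of_mem m1, v1, e1, n1⟩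
    · exact ⟨Finset.mem_insert_of_mem m2, v2, e2, n2⟩
    · exact ⟨Finset.mem_insert_of_mem m3, v3, e3, n3⟩
    · exact ⟨Finset.mem_insert_self _ _, hv, hw, hwv⟩

lemma subset_cases {e t : Finset (Fin 10)} (hsub : e ⊆ t) (ht : t.card = 4) (he : e.card = 3) :
    ∃ x ∈ t, e = t.erase x := by
  have h1 : (t \ e).card = 1 := by rw [Finset.card_sdiff_of_subset hsub, ht, he]
  obtain ⟨x, hx⟩ := Finset.card_eq_one.1 h1
  have hxt : x ∈ t := (Finset.mem_sdiff.1 (hx ▸ Finset.mem_singleton_self x)).1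
  refine ⟨x, hxt, ?_⟩
  rw [← Finset.sdiff_singleton_eq_erase, ← hx, Finset.sdiff_sdiff_eq_self hsub]

lemma noStar (E : Finset (Finset V)) (v : V)
    (h : (E.filter (fun e => v ∈ e)).card ≤ 4 ∨ (nbr E v).card ≤ 4) :
    ¬ IsBergeStar E v 5 := by
  rintro ⟨y, f, hy, hf, hc⟩
  rcases h with h | h
  · have h5 : (Finset.univ.image f).card = 5 := by
      rw [Finset.card_image_of_injective _ hf, Finset.card_univ, Fintype.card_fin]
    have hsub : Finset.univ.image f ⊆ E.filter (fun e => v ∈ e) := by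
      intro s hs
      obtain ⟨i, _, rfl⟩ := Finset.mem_image.1 hs
      exact Finset.mem_filter.2 ⟨(hc i).1, (hc i).2.1⟩
    have := Finset.card_le_card hsub
    omega
  · have h5 : (Finset.univ.image y).card = 5 := by
      rw [Finset.card_image_of_injective _ hy, Finset.card_univ, Fintype.card_fin]
    have hsub : Finset.univ.image y ⊆ nbr E v := by
      intro z hz
      obtain ⟨i, _, rfl⟩ := Finset.mem_image.1 hz
      exact Finset.mem_erase.2 ⟨(hc i).2.2.2,
        Finset.mem_biUnion.2 ⟨f i, Finset.mem_filter.2 ⟨(hc i).1, (hc i).2.1⟩, (hc i).2.2.1⟩⟩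
    have := Finset.card_le_card hsub
    omega

theorem stmt14 :
    brokenLantern.card = 15 ∧
    (∀ v : Fin 10, ¬ IsBergeStar brokenLantern v 5) ∧
    (∀ e : Finset (Fin 10), e.card = 3 → e ∉ brokenLantern →
      ∃ v : Fin 10, IsBergeStar (insert e brokenLantern) v 5) := by
  refine ⟨by decide, ?_, ?_⟩
  · have hdn : ∀ v : Fin 10,
        (brokenLantern.filter (fun e => v ∈ e)).card ≤ 4 ∨ (nbr brokenLantern v).card ≤ 4 := by
      decide
    exact fun v => noStar _ _ (hdn v)
  · intro e hcard hne
    by_cases h0 : (0 : Fin 10) ∈ e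
    · -- v = 0
      have hns : ¬ e ⊆ ({0,4,5,6} : Finset (Fin 10)) := by
        intro hs
        obtain ⟨x, hxt, hex⟩ := subset_cases hs (by decide) hcard
        fin_cases hxt
        · rw [hex] at h0; exact absurd h0 (by decide)
        · exact hne (by rw [hex]; decide)
        · exact hne (by rw [hex]; decide)
        · exact hne (by rw [hex]; decide)
      obtain ⟨w, hw, hwn⟩ := Finset.not_subset.1 hns
      fin_cases w
      · exact absurd (by decide) hwn
      · exact ⟨0, mk5' e {0,2,3} {0,4,5} {0,4,6} {0,5,6} 0 1 2 4 6 5 hne h0 hw (by decide)⟩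
      · exact ⟨0, mk5' e {0,2,3} {0,4,5} {0,4,6} {0,5,6} 0 2 3 4 6 5 hne h0 hw (by decide)⟩
      · exact ⟨0, mk5' e {0,2,3} {0,4,5} {0,4,6} {0,5,6} 0 3 2 4 6 5 hne h0 hw (by decide)⟩
      · exact absurd (by decide) hwn
      · exact absurd (by decide) hwn
      · exact absurd (by decide) hwn
      · exact ⟨0, mk5' e {0,2,3} {0,4,5} {0,4,6} {0,5,6} 0 7 2 4 6 5 hne h0 hw (by decide)⟩
      · exact ⟨0, mk5' e {0,2,3} {0,4,5} {0,4,6} {0,5,6} 0 8 2 4 6 5 hne h0 hw (by decide)⟩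
      · exact ⟨0, mk5' e {0,2,3} {0,4,5} {0,4,6} {0,5,6} 0 9 2 4 6 5 hne h0 hw (by decide)⟩
    by_cases h2 : (2 : Fin 10) ∈ e
    · -- v = 2
      have hns : ¬ e ⊆ ({2,7,8,9} : Finset (Fin 10)) := by
        intro hs
        obtain ⟨x, hxt, hex⟩ := subset_cases hs (by decide) hcard
        fin_cases hxt
        · rw [hex] at h2; exact absurd h2 (by decide)
        · exact hne (by rw [hex]; decide)
        · exact hne (by rw [hex]; decide)
        · exact hne (by rw [hex]; decide)
      obtain ⟨w, hw, hwn⟩ := Finset.not_subset.1 hns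
      fin_cases w
      · exact absurd hw h0
      · exact ⟨2, mk5' e {0,2,3} {2,7,8} {2,7,9} {2,8,9} 2 1 3 7 9 8 hne h2 hw (by decide)⟩
      · exact absurd (by decide) hwn
      · exact ⟨2, mk5' e {0,2,3} {2,7,8} {2,7,9} {2,8,9} 2 3 0 7 9 8 hne h2 hw (by decide)⟩
      · exact ⟨2, mk5' e {0,2,3} {2,7,8} {2,7,9} {2,8,9} 2 4 3 7 9 8 hne h2 hw (by decide)⟩
      · exact ⟨2, mk5' e {0,2,3} {2,7,8} {2,7,9} {2,8,9} 2 5 3 7 9 8 hne h2 hw (by decide)⟩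
      · exact ⟨2, mk5' e {0,2,3} {2,7,8} {2,7,9} {2,8,9} 2 6 3 7 9 8 hne h2 hw (by decide)⟩
      · exact absurd (by decide) hwn
      · exact absurd (by decide) hwn
      · exact absurd (by decide) hwn
    by_cases h3 : (3 : Fin 10) ∈ e
    · -- v = 3
      have hns : ¬ e ⊆ ({3,7,8,9} : Finset (Fin 10)) := by
        intro hs
        obtain ⟨x, hxt, hex⟩ := subset_cases hs (by decide) hcard
        fin_cases hxt
        · rw [hex] at h3; exact absurd h3 (by decide)
        · exact hne (by rw [hex]; decide)
        · exact hne (by rw [hex]; decide)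
        · exact hne (by rw [hex]; decide)
      obtain ⟨w, hw, hwn⟩ := Finset.not_subset.1 hns
      fin_cases w
      · exact absurd hw h0
      · exact ⟨3, mk5' e {0,2,3} {3,7,8} {3,7,9} {3,8,9} 3 1 2 7 9 8 hne h3 hw (by decide)⟩
      · exact absurd hw h2
      · exact absurd (by decide) hwn
      · exact ⟨3, mk5' e {0,2,3} {3,7,8} {3,7,9} {3,8,9} 3 4 2 7 9 8 hne h3 hw (by decide)⟩
      · exact ⟨3, mk5' e {0,2,3} {3,7,8} {3,7,9} {3,8,9} 3 5 2 7 9 8 hne h3 hw (by decide)⟩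
      · exact ⟨3, mk5' e {0,2,3} {3,7,8} {3,7,9} {3,8,9} 3 6 2 7 9 8 hne h3 hw (by decide)⟩
      · exact absurd (by decide) hwn
      · exact absurd (by decide) hwn
      · exact absurd (by decide) hwn
    by_cases h4 : (4 : Fin 10) ∈ e
    · -- v = 4
      have hns : ¬ e ⊆ ({1,4,5,6} : Finset (Fin 10)) := by
        intro hs
        obtain ⟨x, hxt, hex⟩ := subset_cases hs (by decide) hcard
        fin_cases hxt
        · exact hne (by rw [hex]; decide)
        · rw [hex] at h4; exact absurd h4 (by decide)
        · exact hne (by rw [hex]; decide)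
        · exact hne (by rw [hex]; decide)
      obtain ⟨w, hw, hwn⟩ := Finset.not_subset.1 hns
      fin_cases w
      · exact absurd hw h0
      · exact absurd (by decide) hwn
      · exact absurd hw h2
      · exact absurd hw h3
      · exact absurd (by decide) hwn
      · exact absurd (by decide) hwn
      · exact absurd (by decide) hwn
      · exact ⟨4, mk5' e {4,5,6} {0,4,5} {0,4,6} {1,4,5} 4 7 5 0 6 1 hne h4 hw (by decide)⟩
      · exact ⟨4, mk5' e {4,5,6} {0,4,5} {0,4,6} {1,4,5} 4 8 5 0 6 1 hne h4 hw (by decide)⟩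
      · exact ⟨4, mk5' e {4,5,6} {0,4,5} {0,4,6} {1,4,5} 4 9 5 0 6 1 hne h4 hw (by decide)⟩
    by_cases h5 : (5 : Fin 10) ∈ e
    · -- v = 5
      have hns : ¬ e ⊆ ({1,5,6} : Finset (Fin 10)) := by
        intro hs
        have : e = ({1,5,6} : Finset (Fin 10)) :=
          Finset.eq_of_subset_of_card_le hs (by rw [hcard]; decide)
        exact hne (by rw [this]; decide)
      obtain ⟨w, hw, hwn⟩ := Finset.not_subset.1 hns
      fin_cases w
      · exact absurd hw h0
      · exact absurd (by decide) hwn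
      · exact absurd hw h2
      · exact absurd hw h3
      · exact absurd hw h4
      · exact absurd (by decide) hwn
      · exact absurd (by decide) hwn
      · exact ⟨5, mk5' e {4,5,6} {0,4,5} {0,5,6} {1,5,6} 5 7 4 0 6 1 hne h5 hw (by decide)⟩
      · exact ⟨5, mk5' e {4,5,6} {0,4,5} {0,5,6} {1,5,6} 5 8 4 0 6 1 hne h5 hw (by decide)⟩
      · exact ⟨5, mk5' e {4,5,6} {0,4,5} {0,5,6} {1,5,6} 5 9 4 0 6 1 hne h5 hw (by decide)⟩
    by_cases h6 : (6 : Fin 10) ∈ e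
    · -- v = 6
      have hns : ¬ e ⊆ ({1,6} : Finset (Fin 10)) := by
        intro hs
        have := Finset.card_le_card hs
        rw [hcard] at this
        exact absurd this (by decide)
      obtain ⟨w, hw, hwn⟩ := Finset.not_subset.1 hns
      fin_cases w
      · exact absurd hw h0
      · exact absurd (by decide) hwn
      · exact absurd hw h2
      · exact absurd hw h3
      · exact absurd hw h4
      · exact absurd hw h5
      · exact absurd (by decide) hwn
      · exact ⟨6, mk5' e {4,5,6} {0,4,6} {0,5,6} {1,4,6} 6 7 5 4 0 1 hne h6 hw (by decide)⟩
      · exact ⟨6, mk5' e {4,5,6} {0,4,6} {0,5,6} {1,4,6} 6 8 5 4 0 1 hne h6 hw (by decide)⟩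
      · exact ⟨6, mk5' e {4,5,6} {0,4,6} {0,5,6} {1,4,6} 6 9 5 4 0 1 hne h6 hw (by decide)⟩
    -- remaining: e ⊆ {1,7,8,9}
    have hsub : e ⊆ ({1,7,8,9} : Finset (Fin 10)) := by
      intro z hz
      fin_cases z
      · exact absurd hz h0
      · decide
      · exact absurd hz h2
      · exact absurd hz h3
      · exact absurd hz h4
      · exact absurd hz h5
      · exact absurd hz h6
      · decide
      · decide
      · decide
    obtain ⟨x, hxt, hex⟩ := subset_cases hsub (by decide) hcard
    fin_cases hxt
    · exact absurd (by rw [hex]; decide) hne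
    · rw [hex]
      exact ⟨8, mk5' _ {7,8,9} {2,8,9} {3,8,9} {2,7,8} 8 1 7 9 3 2
        (by decide) (by decide) (by decide) (by decide)⟩
    · rw [hex]
      exact ⟨7, mk5' _ {7,8,9} {2,7,9} {3,7,9} {2,7,8} 7 1 8 9 3 2
        (by decide) (by decide) (by decide) (by decide)⟩
    · rw [hex]
      exact ⟨7, mk5' _ {7,8,9} {2,7,8} {3,7,8} {2,7,9} 7 1 9 8 3 2
        (by decide) (by decide) (by decide) (by decide)⟩
end
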